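/- arXiv:2402.03644 — 5 statements merged into one kernel-verified Lean document; each statement's English description precedes it below -/
import Mathlib

section
/- Let d^{AS}_n be the number of derangements of {1,...,n} that are even permutations. Then for all n ≥ 2, d^{AS}_n = (n!/2)·Σ_{k=0}^{n-2} (-1)^k/k! + (-1)^{n-1}(n-1). -/
open Finset

/-- The number of even derangements of `{1,…,n}`: fixed-point-free permutations of sign `+1`. -/
def dAS (n : ℕ) : ℕ :=
  (Finset.univ.filter fun σ : Equiv.Perm (Fin n) =>
    (∀ i, σ i ≠ i) ∧ Equiv.Perm.sign σ = 1).card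

/-!
By the Leibniz formula, `det (J - 1)` (with `J` the all-ones matrix) is the signed count of
derangements, since a permutation contributes only if it avoids the zero diagonal; the matrix
determinant lemma evaluates it as `(-1)^n (1 - n)`. So even minus odd derangements is
`(-1)^(n-1) (n-1)`, while even plus odd is `D_n = n! ∑_{k ≤ n} (-1)^k / k!`, whose last two
terms also sum to `(-1)^(n-1) (n-1)`.
-/

open Matrix Equiv

theorem Matrix.det_of_one_sub_one {ι R : Type*} [Fintype ι] [DecidableEq ι] [CommRing R] :
    det (of (fun _ _ : ι => (1 : R)) - 1)
      = (-1) ^ Fintype.card ι * (1 - (Fintype.card ι : R)) := by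
  have h : of (fun _ _ : ι => (1 : R)) - 1
      = -(1 + replicateCol Unit (fun _ => (-1 : R)) * replicateRow Unit (fun _ => (1 : R))) := by
    ext i j
    simp [Matrix.mul_apply]
    abel
  rw [h, det_neg, det_one_add_replicateCol_mul_replicateRow]
  simp [dotProduct, sub_eq_add_neg]

theorem two_mul_card_filter_eq_one {α : Type*} (s : Finset α) (f : α → ℤˣ) :
    2 * (#(s.filter (f · = 1)) : ℤ) = #s + ∑ a ∈ s, (f a : ℤ) := by
  have hf : ∀ a, (f a : ℤ) = 2 * (if f a = 1 then 1 else 0) - 1 := fun a => by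
    rcases Int.units_eq_one_or (f a) with h | h <;> simp [h]
  simp only [hf, sum_sub_distrib, ← mul_sum, sum_boole, sum_const, nsmul_eq_mul, mul_one]
  ring

theorem numDerangements_succ_eq_sum {K : Type*} [Field K] [CharZero K] (n : ℕ) :
    (numDerangements (n + 1) : K)
      = (n + 1).factorial * ∑ k ∈ range n, (-1 : K) ^ k / k.factorial + (-1) ^ n * n := by
  induction n with
  | zero => simp
  | succ n ih =>
    have h := congrArg (Int.cast : ℤ → K) (numDerangements_succ (n + 1))
    push_cast at h
    rw [h, ih, sum_range_succ]
    have : (n.factorial : K) ≠ 0 := Nat.cast_ne_zero.mpr n.factorial_ne_zero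
    simp only [Nat.factorial_succ, Nat.cast_mul, Nat.cast_succ]
    field_simp
    ring

namespace Equiv.Perm

variable {ι : Type*} [Fintype ι] [DecidableEq ι]

theorem sum_sign_derangements :
    ∑ σ ∈ univ.filter (fun σ : Perm ι => ∀ i, σ i ≠ i), (sign σ : ℤ)
      = (-1) ^ Fintype.card ι * (1 - (Fintype.card ι : ℤ)) := by
  rw [← det_of_one_sub_one, det_apply, sum_filter]
  refine sum_congr rfl fun σ _ => ?_
  split_ifs with hσ
  · simp [hσ, Units.smul_def]
  · push Not at hσ
    obtain ⟨i, hi⟩ := hσ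
    rw [prod_eq_zero (mem_univ i) (by simp [hi]), smul_zero]

theorem card_filter_derangements :
    #(univ.filter fun σ : Perm ι => ∀ i, σ i ≠ i) = numDerangements (Fintype.card ι) := by
  rw [← card_derangements_eq_numDerangements, ← Fintype.card_subtype]
  exact Fintype.card_congr (Equiv.refl _)

theorem two_mul_card_even_derangements :
    2 * (#(univ.filter fun σ : Perm ι => (∀ i, σ i ≠ i) ∧ sign σ = 1) : ℤ)
      = numDerangements (Fintype.card ι)
        + (-1) ^ Fintype.card ι * (1 - (Fintype.card ι : ℤ)) := by
  rw [← filter_filter, two_mul_card_filter_eq_one, card_filter_derangements,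
    sum_sign_derangements]

end Equiv.Perm

theorem stmt8 (n : ℕ) (hn : 2 ≤ n) :
    (dAS n : ℚ) = ((n.factorial : ℚ) / 2) * (∑ k ∈ Finset.range (n - 1),
        (-1 : ℚ) ^ k / (k.factorial : ℚ)) + (-1 : ℚ) ^ (n - 1) * ((n : ℚ) - 1) := by
  obtain ⟨m, rfl⟩ : ∃ m, n = m + 1 := ⟨n - 1, by omega⟩
  have h := Perm.two_mul_card_even_derangements (ι := Fin (m + 1))
  rw [Fintype.card_fin] at h
  have hq : 2 * (dAS (m + 1) : ℚ)
      = numDerangements (m + 1) + (-1) ^ (m + 1) * (1 - (m + 1 : ℚ)) := by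
    unfold dAS
    exact_mod_cast h
  rw [numDerangements_succ_eq_sum] at hq
  simp only [Nat.add_sub_cancel]
  push_cast at hq ⊢
  linear_combination hq / 2
end

section
/- Let d^{AS}_n be the number of even derangements of {1,...,n}. Then d^{AS}_1 = d^{AS}_2 = 0 and for all n ≥ 3, d^{AS}_n = (n-1)·(d^{AS}_{n-1} + d^{AS}_{n-2} + (-1)^{n-1}). -/
open Finset

open Equiv in
lemma dAS_sum_sign_der (n : ℕ) :
    ∑ σ ∈ (univ.filter fun σ : Perm (Fin n) => ∀ i, σ i ≠ i), (Perm.sign σ : ℤ) =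
      Matrix.det (Matrix.of fun i j : Fin n => if i = j then (0:ℤ) else 1) := by
  rw [Matrix.det_apply,
    ← Finset.sum_filter_add_sum_filter_not univ (fun σ : Perm (Fin n) => ∀ i, σ i ≠ i)]
  have h1 : ∑ σ ∈ filter (fun σ : Perm (Fin n) => ¬∀ i, σ i ≠ i) univ,
      Perm.sign σ • ∏ i : Fin n, Matrix.of (fun i j => if i = j then (0:ℤ) else 1) (σ i) i = 0 := by
    apply Finset.sum_eq_zero
    intro σ hσ
    simp only [mem_filter, not_forall, ne_eq, not_not] at hσ
    obtain ⟨i, hi⟩ := hσ.2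
    rw [Finset.prod_eq_zero (Finset.mem_univ i)]
    · simp
    · simp [Matrix.of_apply, hi]
  rw [h1, add_zero]
  apply Finset.sum_congr rfl
  intro σ hσ
  simp only [mem_filter] at hσ
  rw [Finset.prod_congr rfl (fun i _ => ?_), Finset.prod_const_one]
  · simp [Units.smul_def]
  · simp [Matrix.of_apply, hσ.2 i]

lemma dAS_det_J_sub_I (n : ℕ) :
    Matrix.det (Matrix.of fun i j : Fin n => if i = j then (0:ℤ) else 1) =
      (-1)^n * (1 - (n:ℤ)) := by
  have : (Matrix.of fun i j : Fin n => if i = j then (0:ℤ) else 1) =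
      -(1 + Matrix.replicateCol Unit (fun _ => (-1:ℤ)) * Matrix.replicateRow Unit (fun _ => (1:ℤ))) := by
    ext i j
    by_cases h : i = j <;>
      simp [h, Matrix.one_apply, Matrix.mul_apply, Ne.symm]
  rw [this, Matrix.det_neg, Matrix.det_one_add_replicateCol_mul_replicateRow]
  simp [dotProduct, Fintype.card_fin, sub_eq_add_neg]

open Equiv in
lemma dAS_card_der (n : ℕ) :
    (univ.filter fun σ : Perm (Fin n) => ∀ i, σ i ≠ i).card = numDerangements n := by
  rw [← card_derangements_fin_eq_numDerangements, ← Fintype.card_subtype]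
  apply Fintype.card_congr
  rfl

open Equiv in
lemma dAS_key (n : ℕ) :
    2 * (dAS n : ℤ) = (numDerangements n : ℤ) + (-1)^n * (1 - (n:ℤ)) := by
  rw [← dAS_det_J_sub_I, ← dAS_sum_sign_der]
  set F1 := univ.filter fun σ : Perm (Fin n) => (∀ i, σ i ≠ i) ∧ Perm.sign σ = 1 with hF1
  set F2 := univ.filter fun σ : Perm (Fin n) => (∀ i, σ i ≠ i) ∧ ¬Perm.sign σ = 1 with hF2
  have hsplit : ∑ σ ∈ (univ.filter fun σ : Perm (Fin n) => ∀ i, σ i ≠ i), (Perm.sign σ : ℤ) =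
      ∑ σ ∈ F1, (Perm.sign σ : ℤ) + ∑ σ ∈ F2, (Perm.sign σ : ℤ) := by
    rw [hF1, hF2, ← Finset.filter_filter, ← Finset.filter_filter,
      Finset.sum_filter_add_sum_filter_not]
  have hA : ∑ σ ∈ F1, (Perm.sign σ : ℤ) = (F1.card : ℤ) := by
    rw [Finset.sum_congr rfl (g := fun _ => (1:ℤ)) (fun σ hσ => by
      simp only [hF1, mem_filter] at hσ; rw [hσ.2.2]; rfl)]
    simp
  have hB : ∑ σ ∈ F2, (Perm.sign σ : ℤ) = -(F2.card : ℤ) := by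
    rw [Finset.sum_congr rfl (g := fun _ => (-1:ℤ)) (fun σ hσ => by
      simp only [hF2, mem_filter] at hσ
      rcases Int.units_eq_one_or (Perm.sign σ) with h | h
      · exact absurd h hσ.2.2
      · rw [h]; rfl)]
    simp
  have hcard : ((univ.filter fun σ : Perm (Fin n) => ∀ i, σ i ≠ i).card : ℤ) =
      (F1.card : ℤ) + (F2.card : ℤ) := by
    rw [hF1, hF2, ← Nat.cast_add, ← Finset.filter_filter, ← Finset.filter_filter,
      Finset.card_filter_add_card_filter_not]
  have hD : (dAS n : ℤ) = (F1.card : ℤ) := rfl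
  rw [hsplit, hA, hB, ← dAS_card_der, hcard, hD]; ring

theorem stmt10 :
    dAS 1 = 0 ∧ dAS 2 = 0 ∧
    ∀ n : ℕ, 3 ≤ n →
      (dAS n : ℤ) = ((n : ℤ) - 1) *
        ((dAS (n - 1) : ℤ) + (dAS (n - 2) : ℤ) + (-1 : ℤ) ^ (n - 1)) := by
  refine ⟨by decide, by decide, ?_⟩
  intro n hn
  obtain ⟨m, rfl⟩ : ∃ m, n = m + 3 := ⟨n - 3, by omega⟩
  have h1 : m + 3 - 1 = m + 2 := rfl
  have h2 : m + 3 - 2 = m + 1 := rfl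
  rw [h1, h2]
  apply mul_left_cancel₀ (a := (2:ℤ)) two_ne_zero
  have k3 := dAS_key (m + 3)
  have k2 := dAS_key (m + 2)
  have k1 := dAS_key (m + 1)
  have hrec : (numDerangements (m + 3) : ℤ) =
      ((m:ℤ) + 2) * ((numDerangements (m + 1) : ℤ) + (numDerangements (m + 2) : ℤ)) := by
    have := numDerangements_add_two (m + 1)
    push_cast [this]
    ring
  have hm3 : ((-1:ℤ))^(m+3) = -((-1:ℤ))^m := by ring
  have hm2 : ((-1:ℤ))^(m+2) = ((-1:ℤ))^m := by ring
  have hm1 : ((-1:ℤ))^(m+1) = -((-1:ℤ))^m := by ring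
  rw [hm3] at k3; rw [hm2] at k2; rw [hm1] at k1
  push_cast at k3 k2 k1 ⊢
  nlinarith [k3, k2, k1, hrec]
end

section
/- Let d^{AB}_n be the number of signed derangements σ in the hyperoctahedral group B_n (signed permutations of {1,...,n} with σ(i) ≠ i for all i) whose type-B Coxeter length ℓ_B(σ) is even. Then for all n ≥ 1, d^{AB}_n = n!·Σ_{k=0}^{n-1} 2^{n-k-1}(-1)^k/k! + (-1)^n. -/
open Finset

/-- `w : Fin n → ℤ` is a signed permutation of `{1,…,n}`: the absolute values of its
entries form a permutation of `{1,…,n}`. -/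
def isSignedPerm (n : ℕ) (w : Fin n → ℤ) : Prop :=
  (∀ i, 1 ≤ (w i).natAbs ∧ (w i).natAbs ≤ n) ∧
    Function.Injective fun i => (w i).natAbs

/-- The inversion number of the word `w`, with respect to the usual order on `ℤ`. -/
def invW (n : ℕ) (w : Fin n → ℤ) : ℕ :=
  ((Finset.univ : Finset (Fin n × Fin n)).filter fun p => p.1 < p.2 ∧ w p.2 < w p.1).card

/-- The type-`B` length: `ℓ_B(w) = inv(w) - ∑_{i : w_i < 0} w_i`. -/
def lenB (n : ℕ) (w : Fin n → ℤ) : ℤ :=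
  (invW n w : ℤ) - ∑ i ∈ Finset.univ.filter (fun i : Fin n => w i < 0), w i

/-- `w` is a signed derangement: no entry satisfies `w_i = i` (in 1-indexed notation). -/
def isDerang (n : ℕ) (w : Fin n → ℤ) : Prop :=
  ∀ i : Fin n, w i ≠ ((i : ℕ) : ℤ) + 1

/-- The number of signed derangements in the hyperoctahedral group `B_n` whose
type-`B` length is even. -/
noncomputable def dAB (n : ℕ) : ℕ :=
  Set.ncard {w : Fin n → ℤ |
    isSignedPerm n w ∧ isDerang n w ∧ Even (lenB n w)}

/-!
Encode a signed permutation `w` by the permutation `π` of its absolute values and the set of its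
negative positions. A pair of positions is an inversion of exactly one of `w` and `|w|` iff its
entry of larger absolute value is negative, and a negative entry of absolute value `m` is the
larger one in exactly `m - 1` pairs; hence `ℓ_B(w) ≡ inv(π) + #neg (mod 2)`. Therefore
`2 d^{AB}_n = #(signed derangements) + ∑ (-1)^(inv π + #neg)` over signed derangements. Summing
over the signs first, every `π` other than the identity contributes `0` to the signed sum and the
identity contributes `(-1)^n`; the signed derangements number `∑_π 2^#(moved points of π)`, which
inclusion–exclusion over fixed points evaluates to `∑_k C(n,k) (-1)^k (n-k)! 2^(n-k)`.
-/

theorem card_filter_add_card_filter_eq_card_xor {β : Type*} (s : Finset β) (P Q : β → Prop)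
    [DecidablePred P] [DecidablePred Q] :
    #{x ∈ s | P x} + #{x ∈ s | Q x} = #{x ∈ s | ¬(P x ↔ Q x)} + 2 * #{x ∈ s | P x ∧ Q x} := by
  simp only [card_filter, mul_sum, ← sum_add_distrib]
  refine sum_congr rfl fun x _ => ?_
  by_cases hP : P x <;> by_cases hQ : Q x <;> simp [hP, hQ]

theorem card_filter_lt_and_or_swap {β : Type*} [Fintype β] [LinearOrder β]
    (r : β → β → Prop) [DecidableRel r] (hr : ∀ a b, r a b → ¬r b a) :
    #{p : β × β | p.1 < p.2 ∧ (r p.1 p.2 ∨ r p.2 p.1)} = #{p : β × β | r p.1 p.2} := by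
  refine card_nbij' (fun p => if r p.1 p.2 then p else p.swap)
    (fun p => if p.1 < p.2 then p else p.swap) ?_ ?_ ?_ ?_
  · intro p hp
    simp only [coe_filter, mem_univ, true_and, Set.mem_ofPred_eq] at hp ⊢
    split_ifs <;> tauto
  · intro p hp
    simp only [coe_filter, mem_univ, true_and, Set.mem_ofPred_eq] at hp ⊢
    have hne : p.1 ≠ p.2 := fun h => hr _ _ hp (h ▸ hp)
    split_ifs with h
    · exact ⟨h, .inl hp⟩
    · exact ⟨lt_of_le_of_ne (not_lt.1 h) hne.symm, .inr hp⟩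
  · intro p hp
    simp only [coe_filter, mem_univ, true_and, Set.mem_ofPred_eq] at hp
    dsimp only
    split_ifs <;> simp_all [lt_asymm]
  · intro p hp
    simp only [coe_filter, mem_univ, true_and, Set.mem_ofPred_eq] at hp
    dsimp only
    split_ifs <;> simp_all

theorem card_filter_perm_lt {n : ℕ} (π : Equiv.Perm (Fin n)) (j : Fin n) :
    #{k | π k < j} = j := by
  rw [card_equiv π (t := Iio j) (by simp), Fin.card_Iio]

section PermSums
variable {α : Type*} [Fintype α] [DecidableEq α]

theorem card_perm_fixing_pointwise (t : Finset α) :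
    #{σ : Equiv.Perm α | ∀ a ∈ t, σ a = a} = (Fintype.card α - #t).factorial := by
  rw [← Fintype.card_subtype,
    Fintype.card_congr ((Equiv.Perm.subtypeEquivSubtypePerm (· ∉ t)).trans
      (Equiv.subtypeEquivRight fun σ => by simp only [not_not])).symm,
    Fintype.card_perm, Fintype.card_subtype_compl, Fintype.card_coe]

theorem sum_forall_imp_pow_card_eq_prod {R : Type*} [CommSemiring R] (p : α → Prop)
    [DecidablePred p] (s : R) :
    ∑ ε : α → Bool, (if ∀ a, p a → ε a = true then s ^ #{a | ε a = true} else 0)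
      = ∏ a, (if p a then s else s + 1) := by
  have hfactor (a : α) : (if p a then s else s + 1)
      = ∑ b : Bool, if p a → b = true then (if b = true then s else 1) else 0 := by
    by_cases h : p a <;> simp [h]
  simp_rw [hfactor, Fintype.prod_sum, Fintype.prod_ite_zero, prod_ite, prod_const, one_pow,
    mul_one]

theorem prod_ite_fixed_one_eq_pow {M : Type*} [CommMonoid M] (σ : Equiv.Perm α) (x : M) :
    ∏ a, (if σ a = a then 1 else x) = x ^ #{a | σ a ≠ a} := by
  rw [prod_ite, prod_const_one, one_mul, prod_const]

theorem prod_ite_fixed_neg_one_zero {R : Type*} [CommRing R] (σ : Equiv.Perm α) :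
    ∏ a, (if σ a = a then (-1 : R) else -1 + 1) = if σ = 1 then (-1) ^ Fintype.card α else 0 := by
  simp only [neg_add_cancel, Fintype.prod_ite_zero, prod_const, card_univ]
  congr 1
  exact propext ⟨fun h => Equiv.ext h, fun h a => by simp [h]⟩

theorem sum_two_pow_card_moved {R : Type*} [CommRing R] :
    ∑ σ : Equiv.Perm α, (2 : R) ^ #{a | σ a ≠ a}
      = ∑ k ∈ range (Fintype.card α + 1), ((Fintype.card α).choose k : R) * (-1) ^ k
          * (Fintype.card α - k).factorial * 2 ^ (Fintype.card α - k) := by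
  have hexpand (σ : Equiv.Perm α) : (2 : R) ^ #{a | σ a ≠ a}
      = ∑ t : Finset α, (if ∀ a ∈ t, σ a = a then (-1 : R) ^ #t else 0)
          * 2 ^ (Fintype.card α - #t) := by
    have h (a : α) : (if σ a = a then (1 : R) else 2) = (if σ a = a then -1 else 0) + 2 := by
      split_ifs <;> norm_num
    simp_rw [← prod_ite_fixed_one_eq_pow, h, Fintype.prod_add, prod_const, card_compl,
      Finset.prod_ite_zero, prod_const]
  simp_rw [hexpand]
  rw [sum_comm, ← powerset_univ]
  simp_rw [← sum_mul, sum_ite, sum_const_zero, add_zero, sum_const, nsmul_eq_mul,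
    card_perm_fixing_pointwise]
  rw [sum_powerset_apply_card (fun k => ((Fintype.card α - k).factorial : R) * (-1) ^ k
    * 2 ^ (Fintype.card α - k)), card_univ]
  refine sum_congr rfl fun k _ => ?_
  rw [nsmul_eq_mul]
  ring

end PermSums

section SignedWord
variable {n : ℕ}

def signedWord (π : Equiv.Perm (Fin n)) (ε : Fin n → Bool) : Fin n → ℤ :=
  fun i => if ε i then -((π i : ℕ) + 1) else (π i : ℕ) + 1

def invCount (π : Equiv.Perm (Fin n)) : ℕ :=
  #{p : Fin n × Fin n | p.1 < p.2 ∧ π p.2 < π p.1}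

theorem invCount_one : invCount (1 : Equiv.Perm (Fin n)) = 0 := by
  rw [invCount, card_eq_zero, filter_eq_empty_iff]
  exact fun _ _ h => lt_asymm h.1 h.2

theorem exists_signedWord_eq {w : Fin n → ℤ} (hw : isSignedPerm n w) :
    ∃ π ε, signedWord π ε = w := by
  have hinj : Function.Injective fun i => (⟨(w i).natAbs - 1, by have := hw.1 i; omega⟩ : Fin n) :=
    fun i j h => hw.2 <| by
      have := hw.1 i; have := hw.1 j; simp only [Fin.mk.injEq] at h; dsimp only; omega
  refine ⟨Equiv.ofBijective _ (Finite.injective_iff_bijective.1 hinj), fun i => decide (w i < 0),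
    funext fun i => ?_⟩
  have := hw.1 i
  simp only [signedWord, Equiv.ofBijective_apply, decide_eq_true_eq]
  split <;> omega

variable (π : Equiv.Perm (Fin n)) (ε : Fin n → Bool)

theorem natAbs_signedWord (i : Fin n) : (signedWord π ε i).natAbs = π i + 1 := by
  unfold signedWord
  split <;> omega

theorem signedWord_neg_iff (i : Fin n) : signedWord π ε i < 0 ↔ ε i = true := by
  unfold signedWord
  cases ε i <;> simp <;> omega

theorem isSignedPerm_signedWord : isSignedPerm n (signedWord π ε) := by
  refine ⟨fun i => ?_, fun i j h => π.injective (Fin.ext ?_)⟩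
  · rw [natAbs_signedWord]
    omega
  · simpa only [natAbs_signedWord, Nat.add_right_cancel_iff] using h

theorem isDerang_signedWord_iff :
    isDerang n (signedWord π ε) ↔ ∀ i, π i = i → ε i = true := by
  refine forall_congr' fun i => ?_
  unfold signedWord
  cases ε i <;> simp [Fin.ext_iff]
  omega

theorem signedWord_injective :
    Function.Injective fun x : Equiv.Perm (Fin n) × (Fin n → Bool) => signedWord x.1 x.2 := by
  rintro ⟨π, ε⟩ ⟨π', ε'⟩ (h : signedWord π ε = signedWord π' ε')
  have hπ (i : Fin n) : π i = π' i := Fin.ext <| by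
    simpa [natAbs_signedWord] using congrArg Int.natAbs (congrFun h i)
  have hε (i : Fin n) : ε i = ε' i := by
    rw [Bool.eq_iff_iff, ← signedWord_neg_iff π, ← signedWord_neg_iff π', congrFun h i]
  simp only [Prod.mk.injEq]
  exact ⟨Equiv.ext hπ, funext hε⟩

theorem lenB_signedWord :
    lenB n (signedWord π ε)
      = invW n (signedWord π ε) + ∑ i with ε i = true, ((π i : ℕ) + 1 : ℤ) := by
  rw [lenB, sub_eq_add_neg, ← sum_neg_distrib]
  congr 1
  refine sum_congr (filter_congr fun i _ => signedWord_neg_iff π ε i) fun i hi => ?_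
  simp only [signedWord, (mem_filter.1 hi).2, if_true, neg_neg]

theorem signedWord_lt_xor_iff {a b : Fin n} (hab : a ≠ b) :
    ¬(signedWord π ε b < signedWord π ε a ↔ π b < π a)
      ↔ (ε a = true ∧ π b < π a) ∨ (ε b = true ∧ π a < π b) := by
  have hne : (π a : ℕ) ≠ π b := Fin.val_ne_of_ne (π.injective.ne hab)
  simp only [signedWord, Fin.lt_def]
  cases ε a <;> cases ε b <;> simp <;> omega

theorem card_filter_neg_lt_eq_sum :
    #{p : Fin n × Fin n | ε p.1 = true ∧ π p.2 < π p.1} = ∑ i with ε i = true, (π i : ℕ) := by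
  simp only [card_filter, Fintype.sum_prod_type, sum_filter]
  refine sum_congr rfl fun i _ => ?_
  by_cases hi : ε i = true
  · simp only [hi, true_and, if_true, ← card_filter, card_filter_perm_lt]
  · simp [hi]

theorem invW_signedWord_add_invCount :
    invW n (signedWord π ε) + invCount π
      = ∑ i with ε i = true, (π i : ℕ) + 2 * #{p : Fin n × Fin n |
          p.1 < p.2 ∧ signedWord π ε p.2 < signedWord π ε p.1 ∧ π p.2 < π p.1} := by
  have hxor := card_filter_add_card_filter_eq_card_xor {p : Fin n × Fin n | p.1 < p.2}
    (fun p => signedWord π ε p.2 < signedWord π ε p.1) (fun p => π p.2 < π p.1)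
  simp only [filter_filter] at hxor
  rw [invW, invCount, hxor, ← card_filter_neg_lt_eq_sum,
    ← card_filter_lt_and_or_swap (fun a b => ε a = true ∧ π b < π a)
      (fun a b h h' => lt_asymm h.2 h'.2)]
  congr 2
  ext p
  simp only [mem_filter, mem_univ, true_and, and_congr_right_iff]
  exact fun h => signedWord_lt_xor_iff π ε h.ne

theorem even_lenB_signedWord_iff :
    Even (lenB n (signedWord π ε)) ↔ Even (invCount π + #{i | ε i = true}) := by
  have hsum : ∑ i with ε i = true, ((π i : ℕ) + 1 : ℤ)
      = ∑ i with ε i = true, ((π i : ℕ) : ℤ) + #{i | ε i = true} := by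
    rw [sum_add_distrib, sum_const, nsmul_one]
  have h := invW_signedWord_add_invCount π ε
  zify at h
  rw [lenB_signedWord, hsum, eq_sub_of_add_eq h]
  simp [Int.even_add, Int.even_sub, parity_simps]

end SignedWord

theorem dAB_eq_card (n : ℕ) :
    dAB n = #{x : Equiv.Perm (Fin n) × (Fin n → Bool) |
      (∀ i, x.1 i = i → x.2 i = true) ∧ Even (invCount x.1 + #{i | x.2 i = true})} := by
  rw [dAB, ← Set.ncard_coe_finset, coe_filter]
  simp only [mem_univ, true_and]
  rw [← Set.ncard_image_of_injective _ signedWord_injective]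
  congr 1
  ext w
  constructor
  · rintro ⟨hw, hder, hev⟩
    obtain ⟨π, ε, rfl⟩ := exists_signedWord_eq hw
    exact ⟨(π, ε), ⟨(isDerang_signedWord_iff π ε).1 hder, (even_lenB_signedWord_iff π ε).1 hev⟩,
      rfl⟩
  · rintro ⟨⟨π, ε⟩, ⟨hder, hev⟩, rfl⟩
    exact ⟨isSignedPerm_signedWord π ε, (isDerang_signedWord_iff π ε).2 hder,
      (even_lenB_signedWord_iff π ε).2 hev⟩

theorem two_mul_dAB (n : ℕ) :
    2 * (dAB n : ℚ) = ∑ σ : Equiv.Perm (Fin n), (2 : ℚ) ^ #{a | σ a ≠ a} + (-1) ^ n := by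
  have hsplit (D : Prop) [Decidable D] (k m : ℕ) :
      2 * (if D ∧ Even (k + m) then (1 : ℚ) else 0)
        = (if D then 1 ^ m else 0) + (-1) ^ k * (if D then (-1) ^ m else 0) := by
    by_cases hD : D <;> by_cases he : Even (k + m) <;>
      simp [hD, he, ← pow_add, Nat.not_even_iff_odd.1, one_add_one_eq_two]
  have hsigns (σ : Equiv.Perm (Fin n)) (s : ℚ) :
      ∑ ε : Fin n → Bool, (if ∀ i, σ i = i → ε i = true then s ^ #{i | ε i = true} else 0)
        = ∏ i, (if σ i = i then s else s + 1) := by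
    convert sum_forall_imp_pow_card_eq_prod (fun i => σ i = i) s
  calc 2 * (dAB n : ℚ)
      = ∑ σ : Equiv.Perm (Fin n), ∑ ε : Fin n → Bool,
            (if ∀ i, σ i = i → ε i = true then 1 ^ #{i | ε i = true} else 0)
          + ∑ σ : Equiv.Perm (Fin n), (-1) ^ invCount σ * ∑ ε : Fin n → Bool,
            (if ∀ i, σ i = i → ε i = true then (-1) ^ #{i | ε i = true} else 0) := by
        rw [dAB_eq_card, card_filter]
        push_cast
        simp_rw [mul_sum, hsplit, sum_add_distrib, Fintype.sum_prod_type]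
    _ = ∑ σ : Equiv.Perm (Fin n), ∏ i, (if σ i = i then 1 else 2)
          + ∑ σ : Equiv.Perm (Fin n), (-1) ^ invCount σ * ∏ i, (if σ i = i then -1 else -1 + 1) := by
        simp_rw [hsigns, one_add_one_eq_two]
    _ = ∑ σ : Equiv.Perm (Fin n), (2 : ℚ) ^ #{a | σ a ≠ a} + (-1) ^ n := by
        simp_rw [prod_ite_fixed_one_eq_pow, prod_ite_fixed_neg_one_zero, mul_ite, mul_zero,
          sum_ite_eq', mem_univ, if_true, invCount_one, pow_zero, one_mul, Fintype.card_fin]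

theorem choose_mul_factorial_mul_two_pow {n k : ℕ} (hk : k < n) :
    (n.choose k : ℚ) * (-1) ^ k * (n - k).factorial * 2 ^ (n - k)
      = 2 * (n.factorial * (2 ^ (n - k - 1) * (-1) ^ k / k.factorial)) := by
  have hpow : (2 : ℚ) ^ (n - k) = 2 ^ (n - k - 1) * 2 := by
    rw [← pow_succ, Nat.sub_add_cancel (Nat.sub_pos_of_lt hk)]
  rw [Nat.cast_choose ℚ hk.le, hpow]
  field_simp

theorem stmt11_general (n : ℕ) :
    (dAB n : ℚ) = (n.factorial : ℚ) *
        (∑ k ∈ Finset.range n, (2 : ℚ) ^ (n - k - 1) * (-1 : ℚ) ^ k / (k.factorial : ℚ))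
      + (-1 : ℚ) ^ n := by
  have h := two_mul_dAB n
  rw [sum_two_pow_card_moved, Fintype.card_fin, sum_range_succ,
    sum_congr rfl fun k hk => choose_mul_factorial_mul_two_pow (mem_range.1 hk), ← mul_sum,
    ← mul_sum] at h
  simp only [Nat.choose_self, Nat.sub_self, Nat.factorial_zero] at h
  linarith

theorem stmt11 (n : ℕ) (hn : 1 ≤ n) :
    (dAB n : ℚ) = (n.factorial : ℚ) *
        (∑ k ∈ Finset.range n, (2 : ℚ) ^ (n - k - 1) * (-1 : ℚ) ^ k / (k.factorial : ℚ))
      + (-1 : ℚ) ^ n :=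
  stmt11_general n
end

section
/- Let π ∈ B_n be a signed permutation and dp(π) its derangement part (the reduction of the signed subword of non-fixed points of π). Then ℓ_B(π) ≡ ℓ_B(dp(π)) (mod 2). Equivalently: for a signed permutation π with a fixed point at position t (π_t = t), deleting the entry t and reducing changes ℓ_B by an even amount. -/
open Finset

/-- The positions of the non-fixed entries of the signed word `w` (1-indexed: `w_i ≠ i`). -/
def nfpB (n : ℕ) (w : Fin n → ℤ) : Finset (Fin n) :=
  Finset.univ.filter fun i : Fin n => w i ≠ ((i : ℕ) : ℤ) + 1

private lemma ltiff (x y : ℤ) (hx : x ≠ 0) (hy : y ≠ 0) :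
    x < y ↔ ((x < 0 ∧ 0 < y) ∨ (0 < x ∧ 0 < y ∧ x.natAbs < y.natAbs) ∨
      (x < 0 ∧ y < 0 ∧ y.natAbs < x.natAbs)) := by omega

private lemma count_le {n : ℕ} (σ : Fin n → ℕ) (hinj : Function.Injective σ)
    (hb : ∀ p, 1 ≤ σ p ∧ σ p ≤ n) (v : ℕ) (hv : v ≤ n) :
    (univ.filter fun p => σ p ≤ v).card = v := by
  have himg : Finset.image σ univ = Finset.Icc 1 n := by
    apply Finset.eq_of_subset_of_card_le
    · intro x hx
      simp only [Finset.mem_image, Finset.mem_univ, true_and] at hx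
      obtain ⟨p, rfl⟩ := hx
      simp only [Finset.mem_Icc]; exact hb p
    · rw [Finset.card_image_of_injective _ hinj]; simp
  calc (univ.filter fun p => σ p ≤ v).card
      = ((univ.filter fun p => σ p ≤ v).image σ).card :=
        (Finset.card_image_of_injective _ hinj).symm
    _ = ((univ.image σ).filter (· ≤ v)).card := by rw [Finset.filter_image]
    _ = v := by
        rw [himg]
        have : (Finset.Icc 1 n).filter (· ≤ v) = Finset.Icc 1 v := by
          ext x; simp only [Finset.mem_filter, Finset.mem_Icc]; omega
        rw [this]; simp

private lemma card_prod_left {α β : Type*} (s : Finset α) (t : Finset β)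
    (p : α × β → Prop) [DecidablePred p] :
    ((s ×ˢ t).filter p).card
      = ∑ a ∈ s, (t.filter fun b => p (a, b)).card := by
  rw [Finset.card_filter, Finset.sum_product]
  exact Finset.sum_congr rfl fun a _ => (Finset.card_filter _ _).symm

private lemma card_prod_right {α β : Type*} (s : Finset α) (t : Finset β)
    (p : α × β → Prop) [DecidablePred p] :
    ((s ×ˢ t).filter p).card
      = ∑ b ∈ t, (s.filter fun a => p (a, b)).card := by
  rw [Finset.card_filter, Finset.sum_product_right]
  exact Finset.sum_congr rfl fun b _ => (Finset.card_filter _ _).symm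

private lemma card_split {α : Type*} [Fintype α] [DecidableEq α] (S : Finset α)
    (P : α → Prop) [DecidablePred P] :
    (univ.filter P).card = (S.filter P).card + (Sᶜ.filter P).card := by
  rw [← Finset.card_union_of_disjoint]
  · congr 1
    ext x
    simp only [Finset.mem_filter, Finset.mem_univ, true_and, Finset.mem_union,
      Finset.mem_compl]
    tauto
  · exact Finset.disjoint_filter_filter disjoint_compl_right

private theorem aux17 (n m : ℕ) (w : Fin n → ℤ) (hw : isSignedPerm n w)
    (S : Finset (Fin n)) (hfix : ∀ t ∉ S, w t = ((t : ℕ) : ℤ) + 1)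
    (d : Fin m → ℤ) (hd : isSignedPerm m d)
    (e : Fin m ≃o {x // x ∈ S})
    (hsign : ∀ j, 0 < d j ↔ 0 < w (e j).1)
    (habs : ∀ j k, (d j).natAbs < (d k).natAbs ↔
      (w (e j).1).natAbs < (w (e k).1).natAbs) :
    lenB n w % 2 = lenB m d % 2 := by
  classical
  set σ : Fin n → ℕ := fun p => (w p).natAbs with hσ
  have hσinj : Function.Injective σ := hw.2
  have hσb : ∀ p, 1 ≤ σ p ∧ σ p ≤ n := hw.1
  have hwne : ∀ p, w p ≠ 0 := by
    intro p h
    have h1 := (hw.1 p).1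
    rw [h] at h1; simp at h1
  have hdne : ∀ j, d j ≠ 0 := by
    intro j h
    have h1 := (hd.1 j).1
    rw [h] at h1; simp at h1
  have hσfix : ∀ t : Fin n, t ∉ S → σ t = (t : ℕ) + 1 := by
    intro t ht
    have h1 := hfix t ht
    simp only [hσ]; omega
  have hneqfix : ∀ (p t : Fin n), p ∈ S → t ∉ S → σ p ≠ (t : ℕ) + 1 := by
    intro p t hp ht h
    have h2 : σ p = σ t := by rw [h, hσfix t ht]
    have hpt : p = t := hσinj h2
    rw [hpt] at hp
    exact ht hp
  have hneg : ∀ j, d j < 0 ↔ w (e j).1 < 0 := by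
    intro j
    have h1 := hdne j
    have h2 := hwne (e j).1
    have h3 := hsign j
    omega
  have hlt : ∀ j k, d j < d k ↔ w (e j).1 < w (e k).1 := by
    intro j k
    rw [ltiff _ _ (hdne j) (hdne k), ltiff _ _ (hwne _) (hwne _),
      hneg j, hneg k, hsign j, hsign k, habs j k, habs k j]
  -- cardinality/sum bijections along e
  have hbijS : ∀ (P : Fin n → Prop) (_ : DecidablePred P),
      ((univ : Finset (Fin m)).filter fun k => P (e k).1).card
        = (S.filter P).card := by
    intro P _
    apply Finset.card_bij (fun k _ => (e k).1)
    · intro k hk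
      simp only [Finset.mem_filter, Finset.mem_univ, true_and] at hk ⊢
      exact ⟨(e k).2, hk⟩
    · intro a _ b _ hab
      exact e.injective (Subtype.ext hab)
    · intro p hp
      simp only [Finset.mem_filter] at hp
      refine ⟨e.symm ⟨p, hp.1⟩, ?_, ?_⟩
      · simp only [Finset.mem_filter, Finset.mem_univ, true_and,
          OrderIso.apply_symm_apply]
        exact hp.2
      · simp [OrderIso.apply_symm_apply]
  have hbijSsum : ∀ (P : Fin n → Prop) (_ : DecidablePred P) (f : Fin n → ℤ),
      (∑ k ∈ (univ : Finset (Fin m)).filter fun k => P (e k).1, f (e k).1)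
        = ∑ p ∈ S.filter P, f p := by
    intro P _ f
    apply Finset.sum_bij (fun k _ => (e k).1)
    · intro k hk
      simp only [Finset.mem_filter, Finset.mem_univ, true_and] at hk ⊢
      exact ⟨(e k).2, hk⟩
    · intro a _ b _ hab
      exact e.injective (Subtype.ext hab)
    · intro p hp
      simp only [Finset.mem_filter] at hp
      refine ⟨e.symm ⟨p, hp.1⟩, ?_, ?_⟩
      · simp only [Finset.mem_filter, Finset.mem_univ, true_and,
          OrderIso.apply_symm_apply]
        exact hp.2
      · simp [OrderIso.apply_symm_apply]
    · intro k _; rfl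
  have hbijS2 : ∀ (P : Fin n → Fin n → Prop) (_ : ∀ a b, Decidable (P a b)),
      ((univ : Finset (Fin m × Fin m)).filter
          fun q => P (e q.1).1 (e q.2).1).card
        = ((S ×ˢ S).filter fun q => P q.1 q.2).card := by
    intro P _
    apply Finset.card_bij (fun q _ => ((e q.1).1, (e q.2).1))
    · intro q hq
      simp only [Finset.mem_filter, Finset.mem_univ, true_and, Finset.mem_product] at hq ⊢
      exact ⟨⟨(e q.1).2, (e q.2).2⟩, hq⟩
    · intro a _ b _ hab
      simp only [Prod.mk.injEq] at hab
      have h1 : a.1 = b.1 := e.injective (Subtype.ext hab.1)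
      have h2 : a.2 = b.2 := e.injective (Subtype.ext hab.2)
      exact Prod.ext h1 h2
    · intro q hq
      simp only [Finset.mem_filter, Finset.mem_product] at hq
      refine ⟨(e.symm ⟨q.1, hq.1.1⟩, e.symm ⟨q.2, hq.1.2⟩), ?_, ?_⟩
      · simp only [Finset.mem_filter, Finset.mem_univ, true_and,
          OrderIso.apply_symm_apply]
        exact hq.2
      · simp [OrderIso.apply_symm_apply]
  -- key quantities
  set A : Fin n → ℕ := fun t => (S.filter fun p => p < t ∧ ((t:ℕ):ℤ) + 1 < w p).card with hA
  set E : Fin n → ℕ := fun t => (S.filter fun p => t < p ∧ w p < ((t:ℕ):ℤ) + 1).card with hE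
  set N : Fin n → ℕ := fun t => (S.filter fun p => w p < -(((t:ℕ):ℤ) + 1)).card with hN
  set cSS : ℕ := ((S ×ˢ S).filter fun q : Fin n × Fin n =>
    q.1 < q.2 ∧ w q.2 < w q.1).card with hcSS
  -- Step 2 : invW m d = cSS
  have step2 : invW m d = cSS := by
    rw [invW]
    have hfe : ((univ : Finset (Fin m × Fin m)).filter fun q => q.1 < q.2 ∧ d q.2 < d q.1)
        = ((univ : Finset (Fin m × Fin m)).filter fun q =>
            (e q.1).1 < (e q.2).1 ∧ w (e q.2).1 < w (e q.1).1) := by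
      apply Finset.filter_congr
      intro q _
      constructor
      · rintro ⟨h1, h2⟩
        exact ⟨Subtype.coe_lt_coe.mpr (e.lt_iff_lt.mpr h1), (hlt q.2 q.1).mp h2⟩
      · rintro ⟨h1, h2⟩
        exact ⟨e.lt_iff_lt.mp (Subtype.coe_lt_coe.mp h1), (hlt q.2 q.1).mpr h2⟩
    rw [hfe]
    exact hbijS2 (fun a b => a < b ∧ w b < w a) (fun a b => by infer_instance)
  -- Step 1 : decompose invW n w
  have step1 : invW n w = cSS + (∑ t ∈ Sᶜ, E t) + (∑ t ∈ Sᶜ, A t) := by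
    rw [invW]
    have split1 := Finset.card_filter_add_card_filter_not
      (s := (univ : Finset (Fin n × Fin n)).filter fun q => q.1 < q.2 ∧ w q.2 < w q.1)
      (p := fun q => q.1 ∈ S)
    rw [Finset.filter_filter, Finset.filter_filter] at split1
    have c1 : ((univ : Finset (Fin n × Fin n)).filter
        fun q => (q.1 < q.2 ∧ w q.2 < w q.1) ∧ q.1 ∈ S).card
        = cSS + ((S ×ˢ Sᶜ).filter fun q : Fin n × Fin n =>
            q.1 < q.2 ∧ w q.2 < w q.1).card := by
      have split2 := Finset.card_filter_add_card_filter_not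
        (s := (univ : Finset (Fin n × Fin n)).filter
          fun q => (q.1 < q.2 ∧ w q.2 < w q.1) ∧ q.1 ∈ S)
        (p := fun q => q.2 ∈ S)
      have f1 : (((univ : Finset (Fin n × Fin n)).filter
          fun q => (q.1 < q.2 ∧ w q.2 < w q.1) ∧ q.1 ∈ S).filter fun q => q.2 ∈ S)
          = ((S ×ˢ S).filter fun q : Fin n × Fin n => q.1 < q.2 ∧ w q.2 < w q.1) := by
        ext q
        simp only [Finset.filter_filter, Finset.mem_filter, Finset.mem_univ, true_and,
          Finset.mem_product]
        tauto
      have f2 : (((univ : Finset (Fin n × Fin n)).filter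
          fun q => (q.1 < q.2 ∧ w q.2 < w q.1) ∧ q.1 ∈ S).filter fun q => ¬ q.2 ∈ S)
          = ((S ×ˢ Sᶜ).filter fun q : Fin n × Fin n => q.1 < q.2 ∧ w q.2 < w q.1) := by
        ext q
        simp only [Finset.filter_filter, Finset.mem_filter, Finset.mem_univ, true_and,
          Finset.mem_product, Finset.mem_compl]
        tauto
      rw [f1, f2] at split2
      omega
    have c2 : ((univ : Finset (Fin n × Fin n)).filter
        fun q => (q.1 < q.2 ∧ w q.2 < w q.1) ∧ ¬ q.1 ∈ S).card
        = ((Sᶜ ×ˢ S).filter fun q : Fin n × Fin n =>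
            q.1 < q.2 ∧ w q.2 < w q.1).card := by
      have split3 := Finset.card_filter_add_card_filter_not
        (s := (univ : Finset (Fin n × Fin n)).filter
          fun q => (q.1 < q.2 ∧ w q.2 < w q.1) ∧ ¬ q.1 ∈ S)
        (p := fun q => q.2 ∈ S)
      have f1 : (((univ : Finset (Fin n × Fin n)).filter
          fun q => (q.1 < q.2 ∧ w q.2 < w q.1) ∧ ¬ q.1 ∈ S).filter fun q => q.2 ∈ S)
          = ((Sᶜ ×ˢ S).filter fun q : Fin n × Fin n => q.1 < q.2 ∧ w q.2 < w q.1) := by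
        ext q
        simp only [Finset.filter_filter, Finset.mem_filter, Finset.mem_univ, true_and,
          Finset.mem_product, Finset.mem_compl]
        tauto
      have f2 : (((univ : Finset (Fin n × Fin n)).filter
          fun q => (q.1 < q.2 ∧ w q.2 < w q.1) ∧ ¬ q.1 ∈ S).filter fun q => ¬ q.2 ∈ S)
          = ∅ := by
        rw [Finset.filter_eq_empty_iff]
        intro q hq
        simp only [Finset.mem_filter, Finset.mem_univ, true_and] at hq
        obtain ⟨⟨hlt12, hwlt⟩, h1⟩ := hq
        intro h2
        have hv1 := hfix q.1 h1
        have hv2 := hfix q.2 h2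
        rw [hv1, hv2] at hwlt
        simp only [Fin.lt_def] at hlt12
        omega
      rw [f1, f2] at split3
      simp only [Finset.card_empty, add_zero] at split3
      omega
    have hEsum : ((Sᶜ ×ˢ S).filter fun q : Fin n × Fin n =>
        q.1 < q.2 ∧ w q.2 < w q.1).card = ∑ t ∈ Sᶜ, E t := by
      rw [card_prod_left]
      apply Finset.sum_congr rfl
      intro t ht
      simp only [Finset.mem_compl] at ht
      apply congrArg
      apply Finset.filter_congr
      intro p _
      constructor
      · rintro ⟨u1, u2⟩
        have u1' : t < p := u1
        have u2' : w p < w t := u2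
        rw [hfix t ht] at u2'
        exact ⟨u1', u2'⟩
      · rintro ⟨u1, u2⟩
        have u2' : w p < w t := by rw [hfix t ht]; exact u2
        exact ⟨u1, u2'⟩
    have hAsum : ((S ×ˢ Sᶜ).filter fun q : Fin n × Fin n =>
        q.1 < q.2 ∧ w q.2 < w q.1).card = ∑ t ∈ Sᶜ, A t := by
      rw [card_prod_right]
      apply Finset.sum_congr rfl
      intro t ht
      simp only [Finset.mem_compl] at ht
      apply congrArg
      apply Finset.filter_congr
      intro p _
      constructor
      · rintro ⟨u1, u2⟩
        have u1' : p < t := u1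
        have u2' : w t < w p := u2
        rw [hfix t ht] at u2'
        exact ⟨u1', u2'⟩
      · rintro ⟨u1, u2⟩
        have u2' : w t < w p := by rw [hfix t ht]; exact u2
        exact ⟨u1, u2'⟩
    omega
  -- counting lemma: for t ∉ S, #{p ∈ S : t+1 < σ p} = #{p ∈ S : t < p}
  have hcount : ∀ t : Fin n, t ∉ S →
      (S.filter fun p => (t : ℕ) + 1 < σ p).card = (S.filter fun p => t < p).card := by
    intro t ht
    have h1 : ((univ : Finset (Fin n)).filter fun p => σ p ≤ (t : ℕ) + 1).card
        = (t : ℕ) + 1 := count_le σ hσinj hσb _ (by omega)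
    have h2 : ((univ : Finset (Fin n)).filter fun p : Fin n => (p : ℕ) + 1 ≤ (t : ℕ) + 1).card
        = (t : ℕ) + 1 := by
      apply count_le (fun p : Fin n => (p : ℕ) + 1)
      · intro a b hab
        have hab' : (a : ℕ) + 1 = (b : ℕ) + 1 := hab
        exact Fin.ext (by omega)
      · intro p; exact ⟨by omega, by omega⟩
      · omega
    have hc1 := Finset.card_filter_add_card_filter_not
      (s := (univ : Finset (Fin n))) (p := fun p => σ p ≤ (t : ℕ) + 1)
    have hc2 := Finset.card_filter_add_card_filter_not
      (s := (univ : Finset (Fin n))) (p := fun p : Fin n => (p : ℕ) + 1 ≤ (t : ℕ) + 1)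
    have hs1 := card_split S (fun p => ¬ σ p ≤ (t : ℕ) + 1)
    have hs2 := card_split S (fun p : Fin n => ¬ ((p : ℕ) + 1 ≤ (t : ℕ) + 1))
    have hfixpart : (Sᶜ.filter fun p => ¬ σ p ≤ (t : ℕ) + 1).card
        = (Sᶜ.filter fun p : Fin n => ¬ ((p : ℕ) + 1 ≤ (t : ℕ) + 1)).card := by
      apply congrArg
      apply Finset.filter_congr
      intro p hp
      simp only [Finset.mem_compl] at hp
      rw [hσfix p hp]
    have g1 : (S.filter fun p => (t : ℕ) + 1 < σ p)
        = (S.filter fun p => ¬ σ p ≤ (t : ℕ) + 1) := by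
      apply Finset.filter_congr
      intro p _
      constructor
      · intro h; omega
      · intro h; omega
    have g2 : (S.filter fun p => t < p)
        = (S.filter fun p : Fin n => ¬ ((p : ℕ) + 1 ≤ (t : ℕ) + 1)) := by
      apply Finset.filter_congr
      intro p _
      simp only [Fin.lt_def]
      constructor
      · intro h; omega
      · intro h; omega
    rw [g1, g2]
    omega
  -- Step 4 : A t + N t = E t for each fixed t
  have step4 : ∀ t : Fin n, t ∉ S → A t + N t = E t := by
    intro t ht
    have hsplit1 := Finset.card_filter_add_card_filter_not
      (s := S.filter fun p => t < p) (p := fun p => w p < ((t:ℕ):ℤ) + 1)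
    rw [Finset.filter_filter, Finset.filter_filter] at hsplit1
    have g2 : (S.filter fun p => t < p ∧ ¬ w p < ((t:ℕ):ℤ) + 1)
        = S.filter fun p => t < p ∧ ((t:ℕ):ℤ) + 1 < w p := by
      apply Finset.filter_congr
      intro p hp
      have hne : w p ≠ ((t:ℕ):ℤ) + 1 := by
        intro h
        apply hneqfix p t hp ht
        simp only [hσ]; omega
      constructor
      · rintro ⟨u1, u2⟩; exact ⟨u1, by omega⟩
      · rintro ⟨u1, u2⟩; exact ⟨u1, by omega⟩
    rw [g2] at hsplit1
    -- hsplit1 : E t + B = #{p ∈ S : t < p}  (with B the second card)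
    have hsplit2 := Finset.card_filter_add_card_filter_not
      (s := S.filter fun p => ((t:ℕ):ℤ) + 1 < w p) (p := fun p => p < t)
    rw [Finset.filter_filter, Finset.filter_filter] at hsplit2
    have g3 : (S.filter fun p => ((t:ℕ):ℤ) + 1 < w p ∧ p < t)
        = S.filter fun p => p < t ∧ ((t:ℕ):ℤ) + 1 < w p := by
      apply Finset.filter_congr
      intro p _
      constructor <;> (rintro ⟨u1, u2⟩; exact ⟨u2, u1⟩)
    have g4 : (S.filter fun p => ((t:ℕ):ℤ) + 1 < w p ∧ ¬ p < t)
        = S.filter fun p => t < p ∧ ((t:ℕ):ℤ) + 1 < w p := by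
      apply Finset.filter_congr
      intro p hp
      have hne : p ≠ t := fun h => ht (h ▸ hp)
      simp only [Fin.lt_def] at *
      have hne' : (p : ℕ) ≠ (t : ℕ) := fun h => hne (Fin.ext h)
      constructor
      · rintro ⟨u1, u2⟩; exact ⟨by omega, u1⟩
      · rintro ⟨u1, u2⟩; exact ⟨u2, by omega⟩
    rw [g3, g4] at hsplit2
    have hsplit3 := Finset.card_filter_add_card_filter_not
      (s := S.filter fun p => (t : ℕ) + 1 < σ p) (p := fun p => 0 < w p)
    rw [Finset.filter_filter, Finset.filter_filter] at hsplit3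
    have g5 : (S.filter fun p => (t : ℕ) + 1 < σ p ∧ 0 < w p)
        = S.filter fun p => ((t:ℕ):ℤ) + 1 < w p := by
      apply Finset.filter_congr
      intro p _
      simp only [hσ]
      constructor
      · rintro ⟨u1, u2⟩; omega
      · intro u; omega
    have g6 : (S.filter fun p => (t : ℕ) + 1 < σ p ∧ ¬ 0 < w p)
        = S.filter fun p => w p < -(((t:ℕ):ℤ) + 1) := by
      apply Finset.filter_congr
      intro p _
      have h0 := hwne p
      simp only [hσ]
      constructor
      · rintro ⟨u1, u2⟩; omega
      · intro u; omega
    rw [g5, g6] at hsplit3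
    have hiv := hcount t ht
    simp only [hA, hE, hN]
    omega
  -- the value identity for d
  set cnt : Fin n → ℕ := fun p => (Sᶜ.filter fun t : Fin n => (t : ℕ) + 1 < σ p).card with hcnt
  have hval : ∀ j : Fin m, (d j).natAbs + cnt (e j).1 = σ (e j).1 := by
    intro j
    have hvn : σ (e j).1 ≤ n := (hσb _).2
    have habs2 : ∀ k, ((d k).natAbs ≤ (d j).natAbs ↔ σ (e k).1 ≤ σ (e j).1) := by
      intro k
      have h1 := habs j k
      have h2 := habs k j
      simp only [hσ]
      omega
    have hdm : (d j).natAbs ≤ m := (hd.1 j).2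
    have hcard1 : ((univ : Finset (Fin m)).filter
        fun k => (d k).natAbs ≤ (d j).natAbs).card = (d j).natAbs :=
      count_le (fun k => (d k).natAbs) hd.2 hd.1 _ hdm
    have h5 : ((univ : Finset (Fin m)).filter
        fun k => σ (e k).1 ≤ σ (e j).1).card = (d j).natAbs := by
      rw [← hcard1]
      apply congrArg
      apply Finset.filter_congr
      intro k _
      exact (habs2 k).symm
    have hcard3 : (S.filter fun p => σ p ≤ σ (e j).1).card = (d j).natAbs := by
      calc (S.filter fun p => σ p ≤ σ (e j).1).card
          = ((univ : Finset (Fin m)).filter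
              fun k => σ (e k).1 ≤ σ (e j).1).card :=
            (hbijS (fun p => σ p ≤ σ (e j).1) inferInstance).symm
        _ = (d j).natAbs := h5
    have hcard4 : ((univ : Finset (Fin n)).filter fun p => σ p ≤ σ (e j).1).card
        = σ (e j).1 := count_le σ hσinj hσb _ hvn
    have hsplit := card_split S (fun p => σ p ≤ σ (e j).1)
    have g : (Sᶜ.filter fun p : Fin n => σ p ≤ σ (e j).1)
        = Sᶜ.filter fun t : Fin n => (t : ℕ) + 1 < σ (e j).1 := by
      apply Finset.filter_congr
      intro p hp
      simp only [Finset.mem_compl] at hp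
      rw [hσfix p hp]
      have hne := hneqfix (e j).1 p (e j).2 hp
      constructor
      · intro h; omega
      · intro h; omega
    rw [g] at hsplit
    simp only [hcnt]
    omega
  -- negative-sum identities
  have hfneg : (univ.filter fun i : Fin n => w i < 0) = S.filter fun p => w p < 0 := by
    ext p
    simp only [Finset.mem_filter, Finset.mem_univ, true_and]
    constructor
    · intro h
      refine ⟨?_, h⟩
      by_contra hp
      rw [hfix p hp] at h
      omega
    · exact fun h => h.2
  have hsum_w : (∑ i ∈ univ.filter (fun i : Fin n => w i < 0), w i)
      = -∑ p ∈ S.filter (fun p => w p < 0), (σ p : ℤ) := by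
    rw [hfneg, ← Finset.sum_neg_distrib]
    apply Finset.sum_congr rfl
    intro p hp
    simp only [Finset.mem_filter] at hp
    have := hp.2
    simp only [hσ]
    omega
  -- sum of counts of negative entries equals ∑ N over fixed points
  have hcntN : (∑ p ∈ S.filter (fun p => w p < 0), cnt p) = ∑ t ∈ Sᶜ, N t := by
    have hNt : ∀ t ∈ Sᶜ, ((S.filter (fun p => w p < 0)).filter
        fun p => (t : ℕ) + 1 < σ p).card = N t := by
      intro t _
      rw [Finset.filter_filter]
      apply congrArg
      apply Finset.filter_congr
      intro p _
      simp only [hσ]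
      constructor
      · rintro ⟨u1, u2⟩; omega
      · intro u; omega
    calc (∑ p ∈ S.filter (fun p => w p < 0), cnt p)
        = ∑ p ∈ S.filter (fun p => w p < 0), ∑ t ∈ Sᶜ,
            ite ((t : ℕ) + 1 < σ p) 1 0 :=
          Finset.sum_congr rfl fun p _ => by
            rw [hcnt]; exact Finset.card_filter _ _
      _ = ∑ t ∈ Sᶜ, ∑ p ∈ S.filter (fun p => w p < 0),
            ite ((t : ℕ) + 1 < σ p) 1 0 := Finset.sum_comm
      _ = ∑ t ∈ Sᶜ, ((S.filter (fun p => w p < 0)).filter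
            fun p => (t : ℕ) + 1 < σ p).card :=
          Finset.sum_congr rfl fun t _ => (Finset.card_filter _ _).symm
      _ = ∑ t ∈ Sᶜ, N t := Finset.sum_congr rfl hNt
  -- the derangement part negative sum
  have hsum_d : (∑ j ∈ univ.filter (fun j : Fin m => d j < 0), d j)
      = -(∑ p ∈ S.filter (fun p => w p < 0), (σ p : ℤ))
        + (∑ t ∈ Sᶜ, (N t : ℤ)) := by
    have hfd : (univ.filter fun j : Fin m => d j < 0)
        = univ.filter fun j : Fin m => w (e j).1 < 0 := by
      apply Finset.filter_congr
      intro j _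
      exact hneg j
    have hterm : ∀ j ∈ univ.filter fun j : Fin m => w (e j).1 < 0,
        d j = -(σ (e j).1 : ℤ) + (cnt (e j).1 : ℤ) := by
      intro j hj
      simp only [Finset.mem_filter, Finset.mem_univ, true_and] at hj
      have h1 : d j < 0 := (hneg j).mpr hj
      have h2 := hval j
      omega
    calc (∑ j ∈ univ.filter (fun j : Fin m => d j < 0), d j)
        = ∑ j ∈ univ.filter (fun j : Fin m => w (e j).1 < 0), d j := by rw [hfd]
      _ = ∑ j ∈ univ.filter (fun j : Fin m => w (e j).1 < 0),
            (-(σ (e j).1 : ℤ) + (cnt (e j).1 : ℤ)) := Finset.sum_congr rfl hterm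
      _ = ∑ p ∈ S.filter (fun p => w p < 0), (-(σ p : ℤ) + (cnt p : ℤ)) :=
          hbijSsum (fun p => w p < 0) inferInstance
            (fun p => -(σ p : ℤ) + (cnt p : ℤ))
      _ = -(∑ p ∈ S.filter (fun p => w p < 0), (σ p : ℤ))
            + (∑ t ∈ Sᶜ, (N t : ℤ)) := by
          rw [Finset.sum_add_distrib, Finset.sum_neg_distrib]
          congr 1
          rw [← Nat.cast_sum, ← Nat.cast_sum, hcntN]
  -- assemble everything
  have hANE : (∑ t ∈ Sᶜ, A t) + (∑ t ∈ Sᶜ, N t) = ∑ t ∈ Sᶜ, E t := by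
    rw [← Finset.sum_add_distrib]
    apply Finset.sum_congr rfl
    intro t ht
    exact step4 t (Finset.mem_compl.mp ht)
  have key : lenB n w = lenB m d + 2 * (∑ t ∈ Sᶜ, (E t : ℤ)) := by
    rw [lenB, lenB, hsum_w, hsum_d, step1, step2]
    have hANE' : (∑ t ∈ Sᶜ, (A t : ℤ)) + (∑ t ∈ Sᶜ, (N t : ℤ))
        = ∑ t ∈ Sᶜ, (E t : ℤ) := by exact_mod_cast hANE
    push_cast
    linarith [hANE']
  omega

/-- If `w ∈ B_n` is a signed permutation and `d` is the derangement part of `w`, i.e. the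
reduction of the subword of non-fixed entries of `w` (a signed permutation whose entries
have the same signs as the corresponding entries of `w`, and whose absolute values are in
the same relative order), then `ℓ_B(w) ≡ ℓ_B(d) (mod 2)`. -/
theorem stmt17 (n : ℕ) (w : Fin n → ℤ) (hw : isSignedPerm n w)
    (d : Fin (nfpB n w).card → ℤ) (hd : isSignedPerm (nfpB n w).card d)
    (hsign : ∀ j, 0 < d j ↔ 0 < w ((nfpB n w).orderIsoOfFin rfl j).1)
    (habs : ∀ j k, (d j).natAbs < (d k).natAbs ↔
      (w ((nfpB n w).orderIsoOfFin rfl j).1).natAbs <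
        (w ((nfpB n w).orderIsoOfFin rfl k).1).natAbs) :
    lenB n w % 2 = lenB (nfpB n w).card d % 2 := by
  apply aux17 n (nfpB n w).card w hw (nfpB n w) ?_ d hd ((nfpB n w).orderIsoOfFin rfl)
    hsign habs
  intro t ht
  simp only [nfpB, Finset.mem_filter, Finset.mem_univ, true_and, not_not] at ht
  exact ht
end

section
/- (Garsia–Gessel) Let σ = σ_1⋯σ_m and π = π_1⋯π_n be two words with distinct entries taken from disjoint totally ordered sets of positive integers. Then Σ_{α ∈ Sh(σ,π)} q^{maj(α)} = q^{maj(σ)+maj(π)} · C(n+m, n)_q, where Sh(σ,π) is the set of shuffles of σ and π (words of length n+m containing both σ and π as subsequences) and C(n+m,n)_q is the Gaussian binomial coefficient. -/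
open Finset

/-- The major index of a word `w = w_1⋯w_N` with distinct entries:
`maj(w) = ∑_{i : w_i > w_{i+1}} i`. -/
def majW {N : ℕ} (w : Fin N → ℕ) : ℕ :=
  ∑ i : Fin N, if h : i.1 + 1 < N then
    (if w ⟨i.1 + 1, h⟩ < w i then i.1 + 1 else 0) else 0

/-- The shuffle of the words `σ` (of length `m`) and `π` (of length `n`) determined by
the set `s` of positions receiving the letters of `σ` (in order); the complement of `s`
receives the letters of `π` (in order).  (Junk values are used if `s.card ≠ m`.) -/
def shuffleWord {m n : ℕ} (σ : Fin m → ℕ) (π : Fin n → ℕ)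
    (s : Finset (Fin (m + n))) : Fin (m + n) → ℕ := fun i =>
  if i ∈ s then
    (if h : (s.filter fun j => j < i).card < m then σ ⟨_, h⟩ else 0)
  else
    (if h : ((sᶜ).filter fun j => j < i).card < n then π ⟨_, h⟩ else 0)

/-- The `q`-factorial `[n]_q!`. -/
def qfac {K : Type*} [CommSemiring K] (q : K) (n : ℕ) : K :=
  ∏ i ∈ Finset.range n, ∑ j ∈ Finset.range (i + 1), q ^ j

namespace GG

open Polynomial

open scoped Classical

def Compat {N : ℕ} (w f : Fin N → ℕ) : Prop :=
  ∀ i : Fin N, ∀ h : (i : ℕ) + 1 < N,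
    f ⟨(i : ℕ) + 1, h⟩ ≤ f i ∧ (w ⟨(i : ℕ) + 1, h⟩ < w i → f ⟨(i : ℕ) + 1, h⟩ < f i)

noncomputable def CF {N : ℕ} (w : Fin N → ℕ) (K : ℕ) : Finset (Fin N → ℕ) :=
  (Fintype.piFinset fun _ => Finset.range (K + 1)).filter fun f => Compat w f

lemma mem_CF {N : ℕ} {w : Fin N → ℕ} {K : ℕ} {f : Fin N → ℕ} :
    f ∈ CF w K ↔ (∀ p, f p ≤ K) ∧ Compat w f := by
  rw [CF, Finset.mem_filter, Fintype.mem_piFinset]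
  simp [Nat.lt_succ_iff]

-- ===== keys =====

lemma key_lt {a b c d W : ℕ} (hab : a < b) (hc : c < W) : c + a * W < d + b * W := by
  calc c + a * W < W + a * W := by omega
    _ = (a + 1) * W := by ring
    _ ≤ b * W := Nat.mul_le_mul_right _ hab
    _ ≤ d + b * W := by omega

def kmap {N : ℕ} (K W : ℕ) (w f : Fin N → ℕ) : Fin N → ℕ := fun p => w p + (K - f p) * W

lemma key_div {a b W : ℕ} (hW : 0 < W) (ha : a < W) : (a + b * W) / W = b := by
  rw [Nat.add_mul_div_right _ _ hW, Nat.div_eq_of_lt ha, Nat.zero_add]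

lemma key_mod {a b W : ℕ} (ha : a < W) : (a + b * W) % W = a := by
  rw [Nat.add_mul_mod_self_right, Nat.mod_eq_of_lt ha]

lemma strictMono_of_consec {N : ℕ} {f : Fin N → ℕ}
    (h : ∀ (i : ℕ) (hi : i + 1 < N), f ⟨i, by omega⟩ < f ⟨i + 1, hi⟩) : StrictMono f := by
  have key : ∀ (t : ℕ) (a b : Fin N), (b : ℕ) = (a : ℕ) + t + 1 → f a < f b := by
    intro t
    induction t with
    | zero =>
      intro a b hb
      have hb1 : (a : ℕ) + 1 < N := by have := b.2; omega
      have h2 := h a.1 hb1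
      have ea : (⟨(a : ℕ), by omega⟩ : Fin N) = a := rfl
      have eb : (⟨(a : ℕ) + 1, hb1⟩ : Fin N) = b := Fin.ext (show (a : ℕ) + 1 = (b : ℕ) by omega)
      rwa [ea, eb] at h2
    | succ t ih =>
      intro a b hb
      have hmid : (a : ℕ) + t + 1 < N := by have := b.2; omega
      have h1 := ih a ⟨(a : ℕ) + t + 1, hmid⟩ (by simp)
      have h2 : f ⟨(a : ℕ) + t + 1, hmid⟩ < f b := by
        have h3 := h ((a : ℕ) + t + 1) (by have := b.2; omega)
        have eb : (⟨(a : ℕ) + t + 1 + 1, by have := b.2; omega⟩ : Fin N) = b := Fin.ext (show (a : ℕ) + t + 1 + 1 = (b : ℕ) by omega)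
        rwa [eb] at h3
      exact h1.trans h2
  intro a b hab
  exact key ((b : ℕ) - (a : ℕ) - 1) a b (by have := Fin.lt_def.mp hab; omega)

lemma compat_iff_strictMono {N : ℕ} {w f : Fin N → ℕ} {K W : ℕ}
    (hw : Function.Injective w) (hwW : ∀ p, w p < W) (hf : ∀ p, f p ≤ K) :
    Compat w f ↔ StrictMono (kmap K W w f) := by
  constructor
  · intro hc
    apply strictMono_of_consec
    intro i hi
    have hiN : i < N := by omega
    obtain ⟨hle, hstrict⟩ := hc ⟨i, hiN⟩ hi
    dsimp only at hle hstrict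
    unfold kmap
    rcases Nat.lt_or_ge (f ⟨i + 1, hi⟩) (f ⟨i, hiN⟩) with hlt | hge
    · exact key_lt (by have := hf ⟨i, hiN⟩; omega) (hwW _)
    · have heq : f ⟨i + 1, hi⟩ = f ⟨i, hiN⟩ := le_antisymm hle hge
      have hww : w ⟨i, hiN⟩ < w ⟨i + 1, hi⟩ := by
        rcases lt_trichotomy (w ⟨i, hiN⟩) (w ⟨i + 1, hi⟩) with h | h | h
        · exact h
        · exfalso
          have : (⟨i, hiN⟩ : Fin N) = ⟨i + 1, hi⟩ := hw h
          have := Fin.mk.injEq .. ▸ this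
          simp at this
        · exfalso; have := hstrict h; omega
      rw [heq]
      exact Nat.add_lt_add_right hww _
  · intro hs i h
    have hiN : (i : ℕ) < N := i.2
    have hlt : (i : Fin N) < ⟨(i : ℕ) + 1, h⟩ := by rw [Fin.lt_def]; simp
    have hkey := hs hlt
    unfold kmap at hkey
    have h1 : f ⟨(i : ℕ) + 1, h⟩ ≤ f i := by
      by_contra hgt
      push_neg at hgt
      have h2 : kmap K W w f ⟨(i : ℕ) + 1, h⟩ < kmap K W w f i := by
        unfold kmap
        exact key_lt (by have := hf ⟨(i : ℕ) + 1, h⟩; omega) (hwW _)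
      unfold kmap at h2
      exact absurd hkey (lt_asymm h2)
    refine ⟨h1, fun hww => ?_⟩
    by_contra hge
    push_neg at hge
    have heq : f ⟨(i : ℕ) + 1, h⟩ = f i := le_antisymm h1 hge
    rw [heq] at hkey
    exact lt_asymm hkey (Nat.add_lt_add_right hww _)

-- ===== orderEmbOfFin facts =====

lemma filter_lt_card {N k' : ℕ} (s : Finset (Fin N)) (hs : s.card = k') (k : Fin k') :
    (s.filter fun j => j < s.orderEmbOfFin hs k).card = (k : ℕ) := by
  have himg : s.filter (fun j => j < s.orderEmbOfFin hs k)
      = (Finset.Iio k).image (s.orderEmbOfFin hs) := by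
    ext x
    simp only [Finset.mem_filter, Finset.mem_image, Finset.mem_Iio]
    constructor
    · rintro ⟨hxs, hxlt⟩
      have hx : x ∈ Set.range (s.orderEmbOfFin hs) := by
        rw [Finset.range_orderEmbOfFin]; exact hxs
      obtain ⟨i, rfl⟩ := hx
      exact ⟨i, (OrderEmbedding.lt_iff_lt _).mp hxlt, rfl⟩
    · rintro ⟨i, hik, rfl⟩
      exact ⟨Finset.orderEmbOfFin_mem s hs i, (OrderEmbedding.lt_iff_lt _).mpr hik⟩
  rw [himg, Finset.card_image_of_injective _ (s.orderEmbOfFin hs).injective, Fin.card_Iio]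

lemma univ_image_orderEmbOfFin {N k' : ℕ} (s : Finset (Fin N)) (hs : s.card = k') :
    Finset.univ.image (s.orderEmbOfFin hs) = s := by
  ext x
  simp only [Finset.mem_image, Finset.mem_univ, true_and]
  constructor
  · rintro ⟨i, rfl⟩; exact Finset.orderEmbOfFin_mem s hs i
  · intro hx
    have hx2 : x ∈ Set.range (s.orderEmbOfFin hs) := by
      rw [Finset.range_orderEmbOfFin]; exact hx
    obtain ⟨i, hi⟩ := hx2
    exact ⟨i, hi⟩

lemma mem_iff_repr {N k' : ℕ} (s : Finset (Fin N)) (hs : s.card = k') (x : Fin N) :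
    x ∈ s ↔ ∃ k : Fin k', x = s.orderEmbOfFin hs k := by
  constructor
  · intro hx
    rw [← univ_image_orderEmbOfFin s hs] at hx
    obtain ⟨k, _, hk⟩ := Finset.mem_image.mp hx
    exact ⟨k, hk.symm⟩
  · rintro ⟨k, rfl⟩
    exact Finset.orderEmbOfFin_mem s hs k

section Shuffle

variable {m n : ℕ} (σ : Fin m → ℕ) (π : Fin n → ℕ)

lemma card_compl_eq {s : Finset (Fin (m + n))} (hs : s.card = m) : sᶜ.card = n := by
  rw [Finset.card_compl, hs]
  simp

lemma shuffle_apply_left {s : Finset (Fin (m + n))} (hs : s.card = m) (k : Fin m) :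
    shuffleWord σ π s (s.orderEmbOfFin hs k) = σ k := by
  have hmem := Finset.orderEmbOfFin_mem s hs k
  have hc := filter_lt_card s hs k
  unfold shuffleWord
  rw [if_pos hmem, dif_pos (lt_of_eq_of_lt hc k.isLt)]
  exact congrArg σ (Fin.ext hc)

lemma shuffle_apply_right {s : Finset (Fin (m + n))} (hs : s.card = m) (j : Fin n) :
    shuffleWord σ π s (sᶜ.orderEmbOfFin (card_compl_eq hs) j) = π j := by
  have hmem := Finset.orderEmbOfFin_mem sᶜ (card_compl_eq hs) j
  have hnot : sᶜ.orderEmbOfFin (card_compl_eq hs) j ∉ s := Finset.mem_compl.mp hmem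
  have hc := filter_lt_card sᶜ (card_compl_eq hs) j
  unfold shuffleWord
  rw [if_neg hnot, dif_pos (lt_of_eq_of_lt hc j.isLt)]
  exact congrArg π (Fin.ext hc)

variable (K W : ℕ)

noncomputable def fwdG (s : Finset (Fin (m + n))) (f : Fin (m + n) → ℕ) : Fin m → ℕ :=
  if hs : s.card = m then fun k => f (s.orderEmbOfFin hs k) else 0

noncomputable def fwdH (s : Finset (Fin (m + n))) (f : Fin (m + n) → ℕ) : Fin n → ℕ :=
  if hs : sᶜ.card = n then fun j => f (sᶜ.orderEmbOfFin hs j) else 0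

noncomputable def bwdA (g : Fin m → ℕ) (h : Fin n → ℕ) : Finset ℕ :=
  (univ.image fun k => σ k + (K - g k) * W) ∪ (univ.image fun j => π j + (K - h j) * W)

noncomputable def bwdS (g : Fin m → ℕ) (h : Fin n → ℕ) : Finset (Fin (m + n)) :=
  if hA : (bwdA σ π K W g h).card = m + n then
    univ.filter (fun p => ∃ k, (bwdA σ π K W g h).orderEmbOfFin hA p = σ k + (K - g k) * W)
  else ∅

noncomputable def bwdF (g : Fin m → ℕ) (h : Fin n → ℕ) : Fin (m + n) → ℕ :=
  if hA : (bwdA σ π K W g h).card = m + n then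
    fun p => K - ((bwdA σ π K W g h).orderEmbOfFin hA p) / W
  else 0

noncomputable def posL (g : Fin m → ℕ) (h : Fin n → ℕ) (k : Fin m) : Fin (m + n) :=
  if hA : (bwdA σ π K W g h).card = m + n then
    ((bwdA σ π K W g h).orderIsoOfFin hA).symm
      ⟨σ k + (K - g k) * W,
        Finset.mem_union_left _ (Finset.mem_image_of_mem _ (Finset.mem_univ k))⟩
  else ⟨(k : ℕ), by omega⟩

noncomputable def posR (g : Fin m → ℕ) (h : Fin n → ℕ) (j : Fin n) : Fin (m + n) :=
  if hA : (bwdA σ π K W g h).card = m + n then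
    ((bwdA σ π K W g h).orderIsoOfFin hA).symm
      ⟨π j + (K - h j) * W,
        Finset.mem_union_right _ (Finset.mem_image_of_mem _ (Finset.mem_univ j))⟩
  else ⟨m + (j : ℕ), by omega⟩


lemma bwdA_card (hσ : Function.Injective σ) (hπ : Function.Injective π)
    (hdisj : ∀ i j, σ i ≠ π j) (hσW : ∀ k, σ k < W) (hπW : ∀ j, π j < W)
    (g : Fin m → ℕ) (h : Fin n → ℕ) :
    (bwdA σ π K W g h).card = m + n := by
  have hinjL : Function.Injective (fun k : Fin m => σ k + (K - g k) * W) := by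
    intro k k' he
    dsimp only at he
    apply hσ
    calc σ k = (σ k + (K - g k) * W) % W := (key_mod (hσW k)).symm
      _ = (σ k' + (K - g k') * W) % W := by rw [he]
      _ = σ k' := key_mod (hσW k')
  have hinjR : Function.Injective (fun j : Fin n => π j + (K - h j) * W) := by
    intro j j' he
    dsimp only at he
    apply hπ
    calc π j = (π j + (K - h j) * W) % W := (key_mod (hπW j)).symm
      _ = (π j' + (K - h j') * W) % W := by rw [he]
      _ = π j' := key_mod (hπW j')
  have hdisj2 : Disjoint (univ.image fun k => σ k + (K - g k) * W)
      (univ.image fun j => π j + (K - h j) * W) := by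
    rw [Finset.disjoint_left]
    rintro a ha hb
    obtain ⟨k, _, hk⟩ := Finset.mem_image.mp ha
    obtain ⟨j, _, hj⟩ := Finset.mem_image.mp hb
    apply hdisj k j
    calc σ k = (σ k + (K - g k) * W) % W := (key_mod (hσW k)).symm
      _ = (π j + (K - h j) * W) % W := by rw [hk, hj]
      _ = π j := key_mod (hπW j)
  rw [bwdA, Finset.card_union_of_disjoint hdisj2,
    Finset.card_image_of_injective _ hinjL, Finset.card_image_of_injective _ hinjR]
  simp

lemma mem_bwdA {g : Fin m → ℕ} {h : Fin n → ℕ} {a : ℕ} :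
    a ∈ bwdA σ π K W g h
      ↔ (∃ k, σ k + (K - g k) * W = a) ∨ (∃ j, π j + (K - h j) * W = a) := by
  unfold bwdA
  simp only [Finset.mem_union, Finset.mem_image, Finset.mem_univ, true_and]

lemma bwd_spec (hσ : Function.Injective σ) (hπ : Function.Injective π)
    (hdisj : ∀ i j, σ i ≠ π j) (hσW : ∀ k, σ k < W) (hπW : ∀ j, π j < W) (hW : 0 < W)
    {g : Fin m → ℕ} {h : Fin n → ℕ} (hg : g ∈ CF σ K) (hh : h ∈ CF π K) :
    (bwdS σ π K W g h).card = m ∧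
    bwdF σ π K W g h ∈ CF (shuffleWord σ π (bwdS σ π K W g h)) K ∧
    fwdG (bwdS σ π K W g h) (bwdF σ π K W g h) = g ∧
    fwdH (bwdS σ π K W g h) (bwdF σ π K W g h) = h := by
  obtain ⟨hgK, hgc⟩ := mem_CF.mp hg
  obtain ⟨hhK, hhc⟩ := mem_CF.mp hh
  have hA : (bwdA σ π K W g h).card = m + n := bwdA_card σ π K W hσ hπ hdisj hσW hπW g h
  have hsmg : StrictMono (kmap K W σ g) := (compat_iff_strictMono hσ hσW hgK).mp hgc
  have hsmh : StrictMono (kmap K W π h) := (compat_iff_strictMono hπ hπW hhK).mp hhc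
  have hκL : ∀ k, (bwdA σ π K W g h).orderEmbOfFin hA (posL σ π K W g h k)
      = σ k + (K - g k) * W := by
    intro k
    unfold posL
    rw [dif_pos hA, ← Finset.coe_orderIsoOfFin_apply, OrderIso.apply_symm_apply]
  have hκR : ∀ j, (bwdA σ π K W g h).orderEmbOfFin hA (posR σ π K W g h j)
      = π j + (K - h j) * W := by
    intro j
    unfold posR
    rw [dif_pos hA, ← Finset.coe_orderIsoOfFin_apply, OrderIso.apply_symm_apply]
  have hLmono : StrictMono (posL σ π K W g h) := by
    intro k k' hlt
    have h1 : σ k + (K - g k) * W < σ k' + (K - g k') * W := hsmg hlt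
    have h2 := ((bwdA σ π K W g h).orderEmbOfFin hA).lt_iff_lt
      (a := posL σ π K W g h k) (b := posL σ π K W g h k')
    rw [hκL k, hκL k'] at h2
    exact h2.mp h1
  have hRmono : StrictMono (posR σ π K W g h) := by
    intro j j' hlt
    have h1 : π j + (K - h j) * W < π j' + (K - h j') * W := hsmh hlt
    have h2 := ((bwdA σ π K W g h).orderEmbOfFin hA).lt_iff_lt
      (a := posR σ π K W g h j) (b := posR σ π K W g h j')
    rw [hκR j, hκR j'] at h2
    exact h2.mp h1
  have hLR : ∀ k j, posL σ π K W g h k ≠ posR σ π K W g h j := by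
    intro k j he
    have h1 := hκL k
    rw [he, hκR j] at h1
    apply hdisj k j
    calc σ k = (σ k + (K - g k) * W) % W := (key_mod (hσW k)).symm
      _ = (π j + (K - h j) * W) % W := by rw [h1]
      _ = π j := key_mod (hπW j)
  have hcover : ∀ p : Fin (m + n),
      (∃ k, p = posL σ π K W g h k) ∨ (∃ j, p = posR σ π K W g h j) := by
    intro p
    have hp : (bwdA σ π K W g h).orderEmbOfFin hA p ∈ bwdA σ π K W g h :=
      Finset.orderEmbOfFin_mem _ hA p
    rcases (mem_bwdA σ π K W).mp hp with ⟨k, hk⟩ | ⟨j, hj⟩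
    · left
      refine ⟨k, ((bwdA σ π K W g h).orderEmbOfFin hA).injective ?_⟩
      rw [hκL k]
      exact hk.symm
    · right
      refine ⟨j, ((bwdA σ π K W g h).orderEmbOfFin hA).injective ?_⟩
      rw [hκR j]
      exact hj.symm
  have hS : bwdS σ π K W g h = univ.image (posL σ π K W g h) := by
    unfold bwdS
    rw [dif_pos hA]
    ext p
    simp only [Finset.mem_filter, Finset.mem_univ, true_and, Finset.mem_image]
    constructor
    · rintro ⟨k, hk⟩
      exact ⟨k, ((bwdA σ π K W g h).orderEmbOfFin hA).injective (by rw [hκL k, hk])⟩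
    · rintro ⟨k, rfl⟩
      exact ⟨k, hκL k⟩
  have hscard : (bwdS σ π K W g h).card = m := by
    rw [hS, Finset.card_image_of_injective _ hLmono.injective, Finset.card_univ,
      Fintype.card_fin]
  have hScompl : (bwdS σ π K W g h)ᶜ = univ.image (posR σ π K W g h) := by
    ext p
    simp only [Finset.mem_compl, hS, Finset.mem_image, Finset.mem_univ, true_and]
    constructor
    · intro hp
      rcases hcover p with ⟨k, rfl⟩ | ⟨j, rfl⟩
      · exact absurd ⟨k, rfl⟩ hp
      · exact ⟨j, rfl⟩
    · rintro ⟨j, rfl⟩ ⟨k, hk⟩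
      exact hLR k j hk
  have hscard' : ((bwdS σ π K W g h)ᶜ).card = n := card_compl_eq hscard
  have hEL : ∀ hs2 : (bwdS σ π K W g h).card = m,
      ⇑((bwdS σ π K W g h).orderEmbOfFin hs2) = posL σ π K W g h := by
    intro hs2
    refine (Finset.orderEmbOfFin_unique hs2 (fun k => ?_) hLmono).symm
    rw [hS]
    exact Finset.mem_image_of_mem _ (Finset.mem_univ k)
  have hER : ∀ hs2 : ((bwdS σ π K W g h)ᶜ).card = n,
      ⇑(((bwdS σ π K W g h)ᶜ).orderEmbOfFin hs2) = posR σ π K W g h := by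
    intro hs2
    refine (Finset.orderEmbOfFin_unique hs2 (fun j => ?_) hRmono).symm
    rw [hScompl]
    exact Finset.mem_image_of_mem _ (Finset.mem_univ j)
  have hFL : ∀ k, bwdF σ π K W g h (posL σ π K W g h k) = g k := by
    intro k
    unfold bwdF
    rw [dif_pos hA]
    rw [hκL k, key_div hW (hσW k)]
    have := hgK k
    omega
  have hFR : ∀ j, bwdF σ π K W g h (posR σ π K W g h j) = h j := by
    intro j
    unfold bwdF
    rw [dif_pos hA]
    rw [hκR j, key_div hW (hπW j)]
    have := hhK j
    omega
  have hwL : ∀ k, shuffleWord σ π (bwdS σ π K W g h) (posL σ π K W g h k) = σ k := by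
    intro k
    have h1 := shuffle_apply_left σ π hscard k
    rwa [hEL hscard] at h1
  have hwR : ∀ j, shuffleWord σ π (bwdS σ π K W g h) (posR σ π K W g h j) = π j := by
    intro j
    have h1 := shuffle_apply_right σ π hscard j
    rwa [hER (card_compl_eq hscard)] at h1
  have hbound : ∀ p, bwdF σ π K W g h p ≤ K := by
    intro p
    unfold bwdF
    rw [dif_pos hA]
    exact Nat.sub_le _ _
  have hwW : ∀ p, shuffleWord σ π (bwdS σ π K W g h) p < W := by
    intro p
    rcases hcover p with ⟨k, rfl⟩ | ⟨j, rfl⟩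
    · rw [hwL]; exact hσW k
    · rw [hwR]; exact hπW j
  have hwinj : Function.Injective (shuffleWord σ π (bwdS σ π K W g h)) := by
    intro p q hpq
    rcases hcover p with ⟨k, rfl⟩ | ⟨j, rfl⟩ <;> rcases hcover q with ⟨k', rfl⟩ | ⟨j', rfl⟩
    · rw [hwL, hwL] at hpq; rw [hσ hpq]
    · rw [hwL, hwR] at hpq; exact absurd hpq (hdisj _ _)
    · rw [hwR, hwL] at hpq; exact absurd hpq.symm (hdisj _ _)
    · rw [hwR, hwR] at hpq; rw [hπ hpq]
  refine ⟨hscard, ?_, ?_, ?_⟩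
  · rw [mem_CF]
    refine ⟨hbound, (compat_iff_strictMono hwinj hwW hbound).mpr ?_⟩
    have hkeq : kmap K W (shuffleWord σ π (bwdS σ π K W g h)) (bwdF σ π K W g h)
        = ⇑((bwdA σ π K W g h).orderEmbOfFin hA) := by
      funext p
      unfold kmap
      rcases hcover p with ⟨k, rfl⟩ | ⟨j, rfl⟩
      · rw [hwL, hFL, hκL]
      · rw [hwR, hFR, hκR]
    rw [hkeq]
    exact ((bwdA σ π K W g h).orderEmbOfFin hA).strictMono
  · unfold fwdG
    rw [dif_pos hscard]
    funext k
    rw [hEL hscard]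
    exact hFL k
  · unfold fwdH
    rw [dif_pos hscard']
    funext j
    rw [hER hscard']
    exact hFR j

lemma fwd_spec (hσ : Function.Injective σ) (hπ : Function.Injective π)
    (hdisj : ∀ i j, σ i ≠ π j) (hσW : ∀ k, σ k < W) (hπW : ∀ j, π j < W) (hW : 0 < W)
    {s : Finset (Fin (m + n))} {f : Fin (m + n) → ℕ} (hs : s.card = m)
    (hf : f ∈ CF (shuffleWord σ π s) K) :
    fwdG s f ∈ CF σ K ∧ fwdH s f ∈ CF π K ∧
    bwdS σ π K W (fwdG s f) (fwdH s f) = s ∧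
    bwdF σ π K W (fwdG s f) (fwdH s f) = f ∧
    (∑ p, f p) = (∑ k, fwdG s f k) + (∑ j, fwdH s f j) := by
  obtain ⟨hfK, hfc⟩ := mem_CF.mp hf
  have hsc : sᶜ.card = n := card_compl_eq hs
  have hGdef : ∀ k, fwdG s f k = f (s.orderEmbOfFin hs k) := by
    intro k
    unfold fwdG
    rw [dif_pos hs]
  have hHdef : ∀ j, fwdH s f j = f (sᶜ.orderEmbOfFin hsc j) := by
    intro j
    unfold fwdH
    rw [dif_pos hsc]
  have hcover : ∀ p : Fin (m + n),
      (∃ k, p = s.orderEmbOfFin hs k) ∨ (∃ j, p = sᶜ.orderEmbOfFin hsc j) := by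
    intro p
    by_cases hp : p ∈ s
    · exact Or.inl ((mem_iff_repr s hs p).mp hp)
    · exact Or.inr ((mem_iff_repr sᶜ hsc p).mp (Finset.mem_compl.mpr hp))
  have hwL : ∀ k, shuffleWord σ π s (s.orderEmbOfFin hs k) = σ k := shuffle_apply_left σ π hs
  have hwR : ∀ j, shuffleWord σ π s (sᶜ.orderEmbOfFin hsc j) = π j := fun j =>
    shuffle_apply_right σ π hs j
  have hwW : ∀ p, shuffleWord σ π s p < W := by
    intro p
    rcases hcover p with ⟨k, rfl⟩ | ⟨j, rfl⟩
    · rw [hwL]; exact hσW k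
    · rw [hwR]; exact hπW j
  have hwinj : Function.Injective (shuffleWord σ π s) := by
    intro p q hpq
    rcases hcover p with ⟨k, rfl⟩ | ⟨j, rfl⟩ <;> rcases hcover q with ⟨k', rfl⟩ | ⟨j', rfl⟩
    · rw [hwL, hwL] at hpq; rw [hσ hpq]
    · rw [hwL, hwR] at hpq; exact absurd hpq (hdisj _ _)
    · rw [hwR, hwL] at hpq; exact absurd hpq.symm (hdisj _ _)
    · rw [hwR, hwR] at hpq; rw [hπ hpq]
  have hsm : StrictMono (kmap K W (shuffleWord σ π s) f) :=
    (compat_iff_strictMono hwinj hwW hfK).mp hfc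
  have hGK : ∀ k, fwdG s f k ≤ K := fun k => by rw [hGdef]; exact hfK _
  have hHK : ∀ j, fwdH s f j ≤ K := fun j => by rw [hHdef]; exact hfK _
  have hGsm : StrictMono (kmap K W σ (fwdG s f)) := by
    have he : kmap K W σ (fwdG s f) = (kmap K W (shuffleWord σ π s) f) ∘ (s.orderEmbOfFin hs) := by
      funext k
      simp only [kmap, Function.comp_apply]
      rw [hGdef, hwL]
    rw [he]
    exact hsm.comp (s.orderEmbOfFin hs).strictMono
  have hHsm : StrictMono (kmap K W π (fwdH s f)) := by
    have he : kmap K W π (fwdH s f) = (kmap K W (shuffleWord σ π s) f) ∘ (sᶜ.orderEmbOfFin hsc) := by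
      funext j
      simp only [kmap, Function.comp_apply]
      rw [hHdef, hwR]
    rw [he]
    exact hsm.comp (sᶜ.orderEmbOfFin hsc).strictMono
  have c1 : fwdG s f ∈ CF σ K := mem_CF.mpr ⟨hGK, (compat_iff_strictMono hσ hσW hGK).mpr hGsm⟩
  have c2 : fwdH s f ∈ CF π K := mem_CF.mpr ⟨hHK, (compat_iff_strictMono hπ hπW hHK).mpr hHsm⟩
  have hAeq : bwdA σ π K W (fwdG s f) (fwdH s f)
      = univ.image (kmap K W (shuffleWord σ π s) f) := by
    rw [bwdA]
    ext a
    simp only [Finset.mem_union, Finset.mem_image, Finset.mem_univ, true_and]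
    constructor
    · rintro (⟨k, hk⟩ | ⟨j, hj⟩)
      · refine ⟨s.orderEmbOfFin hs k, ?_⟩
        rw [← hk]
        simp only [kmap]
        rw [hwL, hGdef]
      · refine ⟨sᶜ.orderEmbOfFin hsc j, ?_⟩
        rw [← hj]
        simp only [kmap]
        rw [hwR, hHdef]
    · rintro ⟨p, hp⟩
      rcases hcover p with ⟨k, rfl⟩ | ⟨j, rfl⟩
      · refine Or.inl ⟨k, ?_⟩
        rw [← hp]
        simp only [kmap]
        rw [hwL, hGdef]
      · refine Or.inr ⟨j, ?_⟩
        rw [← hp]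
        simp only [kmap]
        rw [hwR, hHdef]
  have hA' : (bwdA σ π K W (fwdG s f) (fwdH s f)).card = m + n := by
    rw [hAeq, Finset.card_image_of_injective _ hsm.injective, Finset.card_univ,
      Fintype.card_fin]
  have hκeq : ⇑((bwdA σ π K W (fwdG s f) (fwdH s f)).orderEmbOfFin hA')
      = kmap K W (shuffleWord σ π s) f := by
    refine (Finset.orderEmbOfFin_unique hA' (fun p => ?_) hsm).symm
    rw [hAeq]
    exact Finset.mem_image_of_mem _ (Finset.mem_univ p)
  have c3 : bwdS σ π K W (fwdG s f) (fwdH s f) = s := by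
    unfold bwdS
    rw [dif_pos hA']
    ext p
    simp only [Finset.mem_filter, Finset.mem_univ, true_and]
    rw [mem_iff_repr s hs p]
    constructor
    · rintro ⟨k, hk⟩
      rw [hκeq] at hk
      refine ⟨k, hsm.injective ?_⟩
      rw [hk]
      simp only [kmap]
      rw [hwL, hGdef]
    · rintro ⟨k, rfl⟩
      refine ⟨k, ?_⟩
      rw [hκeq]
      simp only [kmap]
      rw [hwL, hGdef]
  have c4 : bwdF σ π K W (fwdG s f) (fwdH s f) = f := by
    unfold bwdF
    rw [dif_pos hA']
    funext p
    rw [hκeq]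
    simp only [kmap]
    rw [key_div hW (hwW p)]
    have := hfK p
    omega
  have c5 : (∑ p, f p) = (∑ k, fwdG s f k) + (∑ j, fwdH s f j) := by
    have h1 : ∑ k, fwdG s f k = ∑ p ∈ s, f p := by
      calc ∑ k, fwdG s f k = ∑ k, f (s.orderEmbOfFin hs k) :=
            Finset.sum_congr rfl fun k _ => hGdef k
        _ = ∑ p ∈ univ.image ⇑(s.orderEmbOfFin hs), f p :=
            (Finset.sum_image (fun a _ b _ hab => (s.orderEmbOfFin hs).injective hab)).symm
        _ = ∑ p ∈ s, f p := by rw [univ_image_orderEmbOfFin]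
    have h2 : ∑ j, fwdH s f j = ∑ p ∈ sᶜ, f p := by
      calc ∑ j, fwdH s f j = ∑ j, f (sᶜ.orderEmbOfFin hsc j) :=
            Finset.sum_congr rfl fun j _ => hHdef j
        _ = ∑ p ∈ univ.image ⇑(sᶜ.orderEmbOfFin hsc), f p :=
            (Finset.sum_image (fun a _ b _ hab => (sᶜ.orderEmbOfFin hsc).injective hab)).symm
        _ = ∑ p ∈ sᶜ, f p := by rw [univ_image_orderEmbOfFin]
    rw [h1, h2]
    exact (Finset.sum_add_sum_compl s f).symm
  exact ⟨c1, c2, c3, c4, c5⟩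

lemma lemmaB (hσ : Function.Injective σ) (hπ : Function.Injective π)
    (hdisj : ∀ i j, σ i ≠ π j) (hσW : ∀ k, σ k < W) (hπW : ∀ j, π j < W) (hW : 0 < W) :
    ∑ s ∈ univ.filter (fun s : Finset (Fin (m + n)) => s.card = m),
      ∑ f ∈ CF (shuffleWord σ π s) K, (Polynomial.X : Polynomial ℚ) ^ (∑ p, f p)
    = (∑ g ∈ CF σ K, (Polynomial.X : Polynomial ℚ) ^ (∑ k, g k))
      * (∑ h ∈ CF π K, (Polynomial.X : Polynomial ℚ) ^ (∑ j, h j)) := by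
  rw [Finset.sum_mul_sum, ← Finset.sum_product', Finset.sum_sigma']
  refine Finset.sum_bij' (i := fun a _ => (fwdG a.1 a.2, fwdH a.1 a.2))
    (j := fun b _ => ⟨bwdS σ π K W b.1 b.2, bwdF σ π K W b.1 b.2⟩) ?_ ?_ ?_ ?_ ?_
  · intro a ha
    rw [Finset.mem_sigma, Finset.mem_filter] at ha
    have spec := fwd_spec σ π K W hσ hπ hdisj hσW hπW hW ha.1.2 ha.2
    exact Finset.mem_product.mpr ⟨spec.1, spec.2.1⟩
  · intro b hb
    rw [Finset.mem_product] at hb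
    have spec := bwd_spec σ π K W hσ hπ hdisj hσW hπW hW hb.1 hb.2
    rw [Finset.mem_sigma, Finset.mem_filter]
    exact ⟨⟨Finset.mem_univ _, spec.1⟩, spec.2.1⟩
  · intro a ha
    rw [Finset.mem_sigma, Finset.mem_filter] at ha
    have spec := fwd_spec σ π K W hσ hπ hdisj hσW hπW hW ha.1.2 ha.2
    exact Sigma.ext spec.2.2.1 (heq_of_eq spec.2.2.2.1)
  · intro b hb
    rw [Finset.mem_product] at hb
    have spec := bwd_spec σ π K W hσ hπ hdisj hσW hπW hW hb.1 hb.2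
    exact Prod.ext spec.2.2.1 spec.2.2.2
  · intro a ha
    rw [Finset.mem_sigma, Finset.mem_filter] at ha
    have spec := fwd_spec σ π K W hσ hπ hdisj hσW hπW hW ha.1.2 ha.2
    rw [spec.2.2.2.2, pow_add]

end Shuffle


/-- descent at (0-indexed) position `j`. -/
def IsDesc {N : ℕ} (w : Fin N → ℕ) (j : Fin N) : Prop :=
  ∃ h : (j : ℕ) + 1 < N, w ⟨(j : ℕ) + 1, h⟩ < w j

/-- number of descents at positions `≥ i`. -/
noncomputable def dtail {N : ℕ} (w : Fin N → ℕ) (i : Fin N) : ℕ :=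
  ∑ j : Fin N, if i ≤ j ∧ IsDesc w j then 1 else 0

noncomputable def des {N : ℕ} (w : Fin N → ℕ) : ℕ :=
  ∑ j : Fin N, if IsDesc w j then 1 else 0


/-- bounded antitone sequences. -/
noncomputable def AF (B N : ℕ) : Finset (Fin N → ℕ) :=
  (Fintype.piFinset fun _ => Finset.range (B + 1)).filter fun g =>
    ∀ i j : Fin N, i ≤ j → g j ≤ g i

noncomputable def Dp (B N : ℕ) : Polynomial ℚ := ∑ g ∈ AF B N, Polynomial.X ^ (∑ i, g i)

noncomputable def Fp (k : ℕ) : Polynomial ℚ :=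
  ∏ i ∈ Finset.range k, (1 - Polynomial.X ^ (i + 1))

noncomputable def Gp (B k : ℕ) : Polynomial ℚ :=
  ∏ i ∈ Finset.range k, (1 - Polynomial.X ^ (B + 1 + i))

lemma majW_eq {N : ℕ} (w : Fin N → ℕ) :
    majW w = ∑ j : Fin N, if IsDesc w j then (j : ℕ) + 1 else 0 := by
  refine Finset.sum_congr rfl fun j _ => ?_
  by_cases h : (j : ℕ) + 1 < N
  · rw [dif_pos h]
    by_cases hw : w ⟨(j : ℕ) + 1, h⟩ < w j
    · rw [if_pos hw, if_pos ⟨h, hw⟩]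
    · rw [if_neg hw, if_neg]
      rintro ⟨h', hw'⟩
      exact hw hw'
  · rw [dif_neg h, if_neg]
    rintro ⟨h', _⟩
    exact h h'

lemma sum_dtail {N : ℕ} (w : Fin N → ℕ) : ∑ i, dtail w i = majW w := by
  rw [majW_eq]
  unfold dtail
  rw [Finset.sum_comm]
  refine Finset.sum_congr rfl fun j _ => ?_
  by_cases h : IsDesc w j
  · rw [if_pos h]
    have h2 : ∀ i : Fin N, (if i ≤ j ∧ IsDesc w j then 1 else 0) = if i ≤ j then 1 else 0 := by
      intro i
      by_cases hij : i ≤ j <;> simp [hij, h]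
    rw [Finset.sum_congr rfl fun i _ => h2 i, Finset.sum_boole]
    have h3 : (univ.filter fun i : Fin N => i ≤ j) = Finset.Iic j := by
      ext x; simp
    simp only [Nat.cast_id, h3, Fin.card_Iic]
  · rw [if_neg h]
    refine Finset.sum_eq_zero fun i _ => ?_
    rw [if_neg]
    rintro ⟨_, hd⟩
    exact h hd

lemma dtail_le_des {N : ℕ} (w : Fin N → ℕ) (i : Fin N) : dtail w i ≤ des w := by
  unfold dtail des
  refine Finset.sum_le_sum fun j _ => ?_
  by_cases h : i ≤ j ∧ IsDesc w j
  · rw [if_pos h, if_pos h.2]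
  · rw [if_neg h]
    split <;> omega

lemma des_le {N : ℕ} (w : Fin N → ℕ) : des w ≤ N := by
  unfold des
  calc (∑ j : Fin N, if IsDesc w j then 1 else 0) ≤ ∑ _j : Fin N, 1 :=
        Finset.sum_le_sum fun j _ => by split <;> omega
    _ = N := by simp

lemma dtail_zero {N : ℕ} (w : Fin N → ℕ) (i : Fin N) (h0 : (i : ℕ) = 0) :
    dtail w i = des w := by
  unfold dtail des
  refine Finset.sum_congr rfl fun j _ => ?_
  have : i ≤ j := by
    rw [Fin.le_def]; omega
  simp [this]

lemma dtail_succ {N : ℕ} (w : Fin N → ℕ) (i : Fin N) (h : (i : ℕ) + 1 < N) :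
    dtail w i = dtail w ⟨(i : ℕ) + 1, h⟩ + (if IsDesc w i then 1 else 0) := by
  unfold dtail
  have h0 : (if IsDesc w i then 1 else 0)
      = ∑ j : Fin N, if j = i then (if IsDesc w j then 1 else 0) else 0 := by
    rw [Finset.sum_ite_eq' univ i (fun j => if IsDesc w j then 1 else 0)]
    simp
  rw [h0, ← Finset.sum_add_distrib]
  refine Finset.sum_congr rfl fun j _ => ?_
  by_cases hji : j = i
  · subst hji
    have h1 : ¬ ((⟨(j : ℕ) + 1, h⟩ : Fin N) ≤ j) := by
      rw [Fin.le_def]; simp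
    simp [h1, le_refl]
  · have hne : (j : ℕ) ≠ (i : ℕ) := fun hc => hji (Fin.ext hc)
    have h2 : (i ≤ j) ↔ ((⟨(i : ℕ) + 1, h⟩ : Fin N) ≤ j) := by
      rw [Fin.le_def, Fin.le_def]
      simp only [Fin.val_mk]
      omega
    simp [hji, h2]

lemma compat_sub {N : ℕ} {w f : Fin N → ℕ} (hf : Compat w f) :
    ∀ (t : ℕ) (i j : Fin N), (j : ℕ) = (i : ℕ) + t → f j + dtail w i ≤ f i + dtail w j := by
  intro t
  induction t with
  | zero =>
    intro i j hij
    have : i = j := Fin.ext (by omega)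
    subst this; exact le_refl _
  | succ t ih =>
    intro i j hij
    have h1 : (i : ℕ) + 1 < N := by have := j.2; omega
    have hstep : f ⟨(i : ℕ) + 1, h1⟩ + dtail w i ≤ f i + dtail w ⟨(i : ℕ) + 1, h1⟩ := by
      rw [dtail_succ w i h1]
      by_cases hD : IsDesc w i
      · obtain ⟨hh, hlt⟩ := hD
        have hlt2 : f ⟨(i : ℕ) + 1, h1⟩ < f i := (hf i h1).2 hlt
        have hD : IsDesc w i := ⟨hh, hlt⟩
        rw [if_pos hD]
        omega
      · rw [if_neg hD]
        have := (hf i h1).1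
        omega
    have h2 := ih ⟨(i : ℕ) + 1, h1⟩ j (by simp only [Fin.val_mk]; omega)
    omega

lemma dtail_le_f {N : ℕ} {w f : Fin N → ℕ} (hf : Compat w f) (i : Fin N) :
    dtail w i ≤ f i := by
  have hN : 0 < N := i.pos
  set last : Fin N := ⟨N - 1, by omega⟩ with hlast
  have hd : dtail w last = 0 := by
    unfold dtail
    refine Finset.sum_eq_zero fun j _ => if_neg ?_
    rintro ⟨h1, h2, _⟩
    rw [Fin.le_def] at h1
    simp only [hlast, Fin.val_mk] at h1
    omega
  have h2 := compat_sub hf (N - 1 - (i : ℕ)) i last (by simp [hlast]; omega)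
  omega

lemma lemmaA {N : ℕ} (w : Fin N → ℕ) (K : ℕ) (hK : des w ≤ K) :
    ∑ f ∈ CF w K, (Polynomial.X : Polynomial ℚ) ^ (∑ p, f p)
      = Polynomial.X ^ majW w * Dp (K - des w) N := by
  rw [Dp, Finset.mul_sum]
  refine Finset.sum_bij' (i := fun f _ => fun p => f p - dtail w p)
    (j := fun g _ => fun p => g p + dtail w p) ?_ ?_ ?_ ?_ ?_
  · -- hi : image in AF
    intro f hf
    rw [CF, Finset.mem_filter, Fintype.mem_piFinset] at hf
    obtain ⟨hb, hc⟩ := hf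
    have hfK : ∀ p, f p ≤ K := fun p => by have := hb p; rw [Finset.mem_range] at this; omega
    have hanti : ∀ i j : Fin N, i ≤ j → f j - dtail w j ≤ f i - dtail w i := by
      intro i j hij
      have h1 := compat_sub hc ((j : ℕ) - (i : ℕ)) i j (by rw [Fin.le_def] at hij; omega)
      have h2 := dtail_le_f hc i
      have h3 := dtail_le_f hc j
      omega
    rw [AF, Finset.mem_filter, Fintype.mem_piFinset]
    refine ⟨fun p => ?_, hanti⟩
    rw [Finset.mem_range]
    have h0 : (⟨0, p.pos⟩ : Fin N) ≤ p := by rw [Fin.le_def]; simp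
    have h1 := hanti _ _ h0
    have h2 := dtail_zero w ⟨0, p.pos⟩ rfl
    have h3 := hfK ⟨0, p.pos⟩
    omega
  · -- hj : image in CF
    intro g hg
    rw [AF, Finset.mem_filter, Fintype.mem_piFinset] at hg
    obtain ⟨hb, hanti⟩ := hg
    have hgB : ∀ p, g p ≤ K - des w := fun p => by
      have := hb p; rw [Finset.mem_range] at this; omega
    rw [CF, Finset.mem_filter, Fintype.mem_piFinset]
    constructor
    · intro p
      rw [Finset.mem_range]
      have h1 := hgB p
      have h2 := dtail_le_des w p
      omega
    · intro i h
      have hle : i ≤ (⟨(i : ℕ) + 1, h⟩ : Fin N) := by rw [Fin.le_def]; simp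
      have hg1 : g ⟨(i : ℕ) + 1, h⟩ ≤ g i := hanti _ _ hle
      have hd := dtail_succ w i h
      dsimp only
      constructor
      · omega
      · intro hlt
        have hD : IsDesc w i := ⟨h, hlt⟩
        rw [if_pos hD] at hd
        omega
  · -- left_inv
    intro f hf
    rw [CF, Finset.mem_filter] at hf
    funext p
    dsimp only
    have := dtail_le_f hf.2 p
    omega
  · -- right_inv
    intro g _
    funext p
    dsimp only
    omega
  · -- weights
    intro f hf
    rw [CF, Finset.mem_filter] at hf
    rw [← pow_add]
    congr 1
    have h1 : ∑ p, ((f p - dtail w p) + dtail w p) = ∑ p, f p :=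
      Finset.sum_congr rfl fun p _ => by have := dtail_le_f hf.2 p; omega
    rw [Finset.sum_add_distrib, sum_dtail] at h1
    dsimp only
    omega

lemma Dp_B_zero (B : ℕ) : Dp B 0 = 1 := by
  have h1 : AF B 0 = {fun _ => 0} := by
    ext g
    simp only [AF, Finset.mem_filter, Fintype.mem_piFinset, Finset.mem_singleton]
    constructor
    · intro _; funext p; exact p.elim0
    · intro _; exact ⟨fun p => p.elim0, fun i _ _ => i.elim0⟩
  rw [Dp, h1, Finset.sum_singleton]
  simp

lemma Dp_zero_N (N : ℕ) : Dp 0 N = 1 := by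
  have h1 : AF 0 N = {fun _ => 0} := by
    ext g
    simp only [AF, Finset.mem_filter, Fintype.mem_piFinset, Finset.mem_singleton,
      Finset.mem_range]
    constructor
    · rintro ⟨hb, _⟩; funext p; have := hb p; omega
    · rintro rfl; exact ⟨fun p => by simp, fun i j _ => le_refl _⟩
  rw [Dp, h1, Finset.sum_singleton]
  simp

lemma Dp_rec (B N : ℕ) :
    Dp (B + 1) (N + 1) = Dp B (N + 1) + Polynomial.X ^ (B + 1) * Dp (B + 1) N := by
  rw [Dp, ← Finset.sum_filter_add_sum_filter_not (AF (B+1) (N+1)) (fun g => g 0 ≤ B)]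
  congr 1
  · -- first part is Dp B (N+1)
    rw [Dp]
    congr 1
    ext g
    simp only [Finset.mem_filter, AF, Fintype.mem_piFinset, Finset.mem_range]
    constructor
    · rintro ⟨⟨hb, hanti⟩, h0⟩
      exact ⟨fun i => by have := hanti 0 i (Fin.zero_le i); omega, hanti⟩
    · rintro ⟨hb, hanti⟩
      exact ⟨⟨fun i => by have := hb i; omega, hanti⟩, by have := hb 0; omega⟩
  · -- second part
    rw [Dp, Finset.mul_sum]
    refine Finset.sum_bij' (i := fun g _ => g ∘ Fin.succ)
      (j := fun g' _ => Fin.cases (B + 1) g') ?_ ?_ ?_ ?_ ?_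
    · intro g hg
      simp only [Finset.mem_filter, AF, Fintype.mem_piFinset, Finset.mem_range, not_le] at hg
      obtain ⟨⟨hb, hanti⟩, _⟩ := hg
      simp only [AF, Finset.mem_filter, Fintype.mem_piFinset, Finset.mem_range]
      exact ⟨fun i => hb _, fun i j hij => hanti _ _ (Fin.succ_le_succ_iff.mpr hij)⟩
    · intro g' hg'
      simp only [AF, Finset.mem_filter, Fintype.mem_piFinset, Finset.mem_range] at hg'
      obtain ⟨hb, hanti⟩ := hg'
      simp only [Finset.mem_filter, AF, Fintype.mem_piFinset, Finset.mem_range, not_le]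
      refine ⟨⟨fun i => ?_, fun i j hij => ?_⟩, by simp⟩
      · induction i using Fin.cases with
        | zero => simp
        | succ k => simp only [Fin.cases_succ]; have := hb k; omega
      · induction i using Fin.cases with
        | zero =>
          induction j using Fin.cases with
          | zero => exact le_refl _
          | succ l => simp only [Fin.cases_succ, Fin.cases_zero]; have := hb l; omega
        | succ k =>
          induction j using Fin.cases with
          | zero =>
            exfalso
            have := Fin.le_def.mp hij
            simp at this
          | succ l =>
            simp only [Fin.cases_succ]
            exact hanti k l (by rwa [Fin.succ_le_succ_iff] at hij)
    · intro g hg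
      simp only [Finset.mem_filter, AF, Fintype.mem_piFinset, Finset.mem_range, not_le] at hg
      obtain ⟨⟨hb, _⟩, h0⟩ := hg
      have hg0 : g 0 = B + 1 := by have := hb 0; omega
      funext p
      induction p using Fin.cases with
      | zero => simp [hg0]
      | succ k => simp
    · intro g' _
      funext k
      simp
    · intro g hg
      simp only [Finset.mem_filter, AF, Fintype.mem_piFinset, Finset.mem_range, not_le] at hg
      obtain ⟨⟨hb, _⟩, h0⟩ := hg
      have hg0 : g 0 = B + 1 := by have := hb 0; omega
      rw [← pow_add]
      congr 1
      rw [Fin.sum_univ_succ, hg0]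
      rfl

lemma lemmaC : ∀ N B, Fp N * Dp B N = Gp B N := by
  intro N
  induction N with
  | zero => intro B; simp [Fp, Gp, Dp_B_zero]
  | succ N ihN =>
    intro B
    induction B with
    | zero =>
      rw [Dp_zero_N, mul_one]
      unfold Fp Gp
      exact Finset.prod_congr rfl fun i _ => by rw [show 0 + 1 + i = i + 1 by omega]
    | succ B ihB =>
      rw [Dp_rec, mul_add, ihB]
      have h2 : Fp (N + 1) * (Polynomial.X ^ (B + 1) * Dp (B + 1) N)
          = Polynomial.X ^ (B + 1) * (1 - Polynomial.X ^ (N + 1)) * Gp (B + 1) N := by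
        have h1 : Fp (N + 1) = (1 - Polynomial.X ^ (N + 1)) * Fp N := by
          rw [Fp, Fp, Finset.prod_range_succ]; ring
        calc Fp (N + 1) * (Polynomial.X ^ (B + 1) * Dp (B + 1) N)
            = Polynomial.X ^ (B + 1) * (1 - Polynomial.X ^ (N + 1)) * (Fp N * Dp (B + 1) N) := by
              rw [h1]; ring
          _ = _ := by rw [ihN]
      rw [h2]
      have g1 : Gp B (N + 1) = (1 - Polynomial.X ^ (B + 1)) * Gp (B + 1) N := by
        rw [Gp, Finset.prod_range_succ']
        have h3 : ∀ i, (1 - (Polynomial.X : Polynomial ℚ) ^ (B + 1 + (i + 1)))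
            = 1 - Polynomial.X ^ (B + 1 + 1 + i) := fun i => by
          rw [show B + 1 + (i + 1) = B + 1 + 1 + i by omega]
        rw [Finset.prod_congr rfl fun i _ => h3 i, ← Gp]
        rw [show B + 1 + 0 = B + 1 by omega]
        ring
      have g2 : Gp (B + 1) (N + 1) = Gp (B + 1) N * (1 - Polynomial.X ^ (B + 1 + 1 + N)) := by
        rw [Gp, Finset.prod_range_succ, ← Gp]
      rw [g1, g2]
      ring

lemma gp_sub_one (B k : ℕ) : (Polynomial.X : Polynomial ℚ) ^ (B + 1) ∣ Gp B k - 1 := by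
  induction k with
  | zero => simp [Gp]
  | succ k ih =>
    have h1 : Gp B (k + 1) = Gp B k * (1 - Polynomial.X ^ (B + 1 + k)) := by
      rw [Gp, Finset.prod_range_succ, ← Gp]
    have h2 : Gp B (k + 1) - 1 = (Gp B k - 1) - Gp B k * Polynomial.X ^ (B + 1 + k) := by
      rw [h1]; ring
    rw [h2]
    exact dvd_sub ih (Dvd.dvd.mul_left (pow_dvd_pow _ (by omega)) _)



lemma Fp_eq (k : ℕ) : Fp k = (1 - Polynomial.X) ^ k * qfac Polynomial.X k := by
  rw [Fp, qfac]
  calc ∏ i ∈ Finset.range k, (1 - (Polynomial.X : Polynomial ℚ) ^ (i + 1))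
      = ∏ i ∈ Finset.range k,
          ((1 - Polynomial.X) * ∑ j ∈ Finset.range (i + 1), Polynomial.X ^ j) := by
        refine Finset.prod_congr rfl fun i _ => ?_
        have hgeo := geom_sum_mul (Polynomial.X : Polynomial ℚ) (i + 1)
        linear_combination hgeo
    _ = (∏ _i ∈ Finset.range k, (1 - (Polynomial.X : Polynomial ℚ)))
        * ∏ i ∈ Finset.range k, ∑ j ∈ Finset.range (i + 1), Polynomial.X ^ j :=
        Finset.prod_mul_distrib
    _ = _ := by rw [Finset.prod_const, Finset.card_range]

lemma mainP {m n : ℕ} (σ : Fin m → ℕ) (π : Fin n → ℕ)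
    (hσ : Function.Injective σ) (hπ : Function.Injective π)
    (hdisj : ∀ i j, σ i ≠ π j) :
    (∑ s ∈ univ.filter (fun s : Finset (Fin (m + n)) => s.card = m),
        (Polynomial.X : Polynomial ℚ) ^ majW (shuffleWord σ π s)) * (Fp m * Fp n)
      = Polynomial.X ^ (majW σ + majW π) * Fp (m + n) := by
  set W : ℕ := (univ.sup σ) + (univ.sup π) + 1 with hWdef
  have hσW : ∀ k, σ k < W := fun k => by
    have := Finset.le_sup (f := σ) (Finset.mem_univ k); omega
  have hπW : ∀ j, π j < W := fun j => by
    have := Finset.le_sup (f := π) (Finset.mem_univ j); omega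
  have hW0 : 0 < W := by omega
  have hdvd : ∀ t : ℕ, (Polynomial.X : Polynomial ℚ) ^ t ∣
      ((∑ s ∈ univ.filter (fun s : Finset (Fin (m + n)) => s.card = m),
          (Polynomial.X : Polynomial ℚ) ^ majW (shuffleWord σ π s)) * (Fp m * Fp n)
        - Polynomial.X ^ (majW σ + majW π) * Fp (m + n)) := by
    intro t
    set K := t + (m + n) with hKdef
    have hB := lemmaB σ π K W hσ hπ hdisj hσW hπW hW0
    rw [lemmaA σ K (by have := des_le σ; omega),
      lemmaA π K (by have := des_le π; omega)] at hB
    rw [Finset.sum_congr rfl (fun s _ => lemmaA (shuffleWord σ π s) K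
      (by have := des_le (shuffleWord σ π s); omega))] at hB
    have e1 : ∑ s ∈ univ.filter (fun s : Finset (Fin (m + n)) => s.card = m),
        (Polynomial.X : Polynomial ℚ) ^ majW (shuffleWord σ π s)
          * Gp (K - des (shuffleWord σ π s)) (m + n) * (Fp m * Fp n)
        = Polynomial.X ^ (majW σ + majW π) * Fp (m + n)
          * (Gp (K - des σ) m * Gp (K - des π) n) := by
      calc _ = ∑ s ∈ univ.filter (fun s : Finset (Fin (m + n)) => s.card = m),
            ((Polynomial.X : Polynomial ℚ) ^ majW (shuffleWord σ π s)
              * Dp (K - des (shuffleWord σ π s)) (m + n)) * (Fp m * Fp n * Fp (m + n)) := by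
            refine Finset.sum_congr rfl fun s _ => ?_
            rw [← lemmaC (m + n) (K - des (shuffleWord σ π s))]
            ring
        _ = (∑ s ∈ univ.filter (fun s : Finset (Fin (m + n)) => s.card = m),
            (Polynomial.X : Polynomial ℚ) ^ majW (shuffleWord σ π s)
              * Dp (K - des (shuffleWord σ π s)) (m + n)) * (Fp m * Fp n * Fp (m + n)) :=
            (Finset.sum_mul _ _ _).symm
        _ = ((Polynomial.X ^ majW σ * Dp (K - des σ) m)
              * (Polynomial.X ^ majW π * Dp (K - des π) n)) * (Fp m * Fp n * Fp (m + n)) := by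
            rw [hB]
        _ = Polynomial.X ^ (majW σ + majW π) * Fp (m + n)
              * ((Fp m * Dp (K - des σ) m) * (Fp n * Dp (K - des π) n)) := by
            rw [pow_add]; ring
        _ = _ := by rw [lemmaC m (K - des σ), lemmaC n (K - des π)]
    have split : ∑ s ∈ univ.filter (fun s : Finset (Fin (m + n)) => s.card = m),
        (Polynomial.X : Polynomial ℚ) ^ majW (shuffleWord σ π s) * (Fp m * Fp n)
          * (1 - Gp (K - des (shuffleWord σ π s)) (m + n))
        = (∑ s ∈ univ.filter (fun s : Finset (Fin (m + n)) => s.card = m),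
            (Polynomial.X : Polynomial ℚ) ^ majW (shuffleWord σ π s) * (Fp m * Fp n))
          - ∑ s ∈ univ.filter (fun s : Finset (Fin (m + n)) => s.card = m),
            (Polynomial.X : Polynomial ℚ) ^ majW (shuffleWord σ π s)
              * Gp (K - des (shuffleWord σ π s)) (m + n) * (Fp m * Fp n) := by
      rw [← Finset.sum_sub_distrib]
      exact Finset.sum_congr rfl fun s _ => by ring
    have hsm2 : (∑ s ∈ univ.filter (fun s : Finset (Fin (m + n)) => s.card = m),
        (Polynomial.X : Polynomial ℚ) ^ majW (shuffleWord σ π s)) * (Fp m * Fp n)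
        = ∑ s ∈ univ.filter (fun s : Finset (Fin (m + n)) => s.card = m),
            (Polynomial.X : Polynomial ℚ) ^ majW (shuffleWord σ π s) * (Fp m * Fp n) :=
      Finset.sum_mul _ _ _
    have key : (∑ s ∈ univ.filter (fun s : Finset (Fin (m + n)) => s.card = m),
          (Polynomial.X : Polynomial ℚ) ^ majW (shuffleWord σ π s)) * (Fp m * Fp n)
        - Polynomial.X ^ (majW σ + majW π) * Fp (m + n)
        = (∑ s ∈ univ.filter (fun s : Finset (Fin (m + n)) => s.card = m),
            (Polynomial.X : Polynomial ℚ) ^ majW (shuffleWord σ π s) * (Fp m * Fp n)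
              * (1 - Gp (K - des (shuffleWord σ π s)) (m + n)))
          + Polynomial.X ^ (majW σ + majW π) * Fp (m + n)
            * (Gp (K - des σ) m * Gp (K - des π) n - 1) := by
      linear_combination hsm2 - split + e1
    rw [key]
    apply dvd_add
    · apply Finset.dvd_sum
      intro s _
      have h1 : (Polynomial.X : Polynomial ℚ) ^ t
          ∣ Gp (K - des (shuffleWord σ π s)) (m + n) - 1 :=
        dvd_trans (pow_dvd_pow _ (by have := des_le (shuffleWord σ π s); omega))
          (gp_sub_one _ _)
      have h2 : (Polynomial.X : Polynomial ℚ) ^ t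
          ∣ 1 - Gp (K - des (shuffleWord σ π s)) (m + n) := by
        have h3 := dvd_neg.mpr h1
        rwa [neg_sub] at h3
      exact Dvd.dvd.mul_left h2 _
    · have hgσ : (Polynomial.X : Polynomial ℚ) ^ t ∣ Gp (K - des σ) m - 1 :=
        dvd_trans (pow_dvd_pow _ (by have := des_le σ; omega)) (gp_sub_one _ _)
      have hgπ : (Polynomial.X : Polynomial ℚ) ^ t ∣ Gp (K - des π) n - 1 :=
        dvd_trans (pow_dvd_pow _ (by have := des_le π; omega)) (gp_sub_one _ _)
      have h4 : (Polynomial.X : Polynomial ℚ) ^ t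
          ∣ Gp (K - des σ) m * Gp (K - des π) n - 1 := by
        have expand : Gp (K - des σ) m * Gp (K - des π) n - 1
            = (Gp (K - des σ) m - 1) * Gp (K - des π) n + (Gp (K - des π) n - 1) := by
          ring
        rw [expand]
        exact dvd_add (hgσ.mul_right _) hgπ
      exact h4.mul_left _
  have hz : (∑ s ∈ univ.filter (fun s : Finset (Fin (m + n)) => s.card = m),
        (Polynomial.X : Polynomial ℚ) ^ majW (shuffleWord σ π s)) * (Fp m * Fp n)
      - Polynomial.X ^ (majW σ + majW π) * Fp (m + n) = 0 :=
    Polynomial.ext fun d => by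
      have h5 := Polynomial.X_pow_dvd_iff.mp (hdvd (d + 1)) d (by omega)
      simpa using h5
  exact sub_eq_zero.mp hz

end GG

/-- Garsia–Gessel: the Mahonian distribution over all shuffles of two disjoint words.
Shuffles of `σ` and `π` are parametrized by the `m`-element subsets of the `m + n`
positions (the positions of the letters of `σ`). -/
theorem stmt18 (m n : ℕ) (σ : Fin m → ℕ) (π : Fin n → ℕ)
    (hσpos : ∀ i, 0 < σ i) (hπpos : ∀ j, 0 < π j)
    (hσ : Function.Injective σ) (hπ : Function.Injective π)
    (hdisj : ∀ i j, σ i ≠ π j) :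
    ∑ s ∈ Finset.univ.filter (fun s : Finset (Fin (m + n)) => s.card = m),
        (RatFunc.X : RatFunc ℚ) ^ majW (shuffleWord σ π s)
      = RatFunc.X ^ (majW σ + majW π) *
          (qfac RatFunc.X (m + n) / (qfac RatFunc.X m * qfac RatFunc.X n)) := by
  have main := GG.mainP σ π hσ hπ hdisj
  set φ := algebraMap (Polynomial ℚ) (RatFunc ℚ) with hφdef
  have hq : ∀ k, φ (qfac Polynomial.X k) = qfac RatFunc.X k := by
    intro k
    rw [qfac, qfac, map_prod]
    refine Finset.prod_congr rfl fun i _ => ?_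
    rw [map_sum]
    refine Finset.sum_congr rfl fun j _ => ?_
    rw [map_pow, RatFunc.algebraMap_X]
  have hFp : ∀ k, φ (GG.Fp k) = (1 - RatFunc.X) ^ k * qfac RatFunc.X k := fun k => by
    rw [GG.Fp_eq k, map_mul, map_pow, map_sub, map_one, RatFunc.algebraMap_X, hq k]
  have main2 := congrArg φ main
  rw [map_mul, map_mul, map_mul, map_sum, hFp, hFp, hFp] at main2
  rw [hφdef] at main2
  simp only [map_pow, RatFunc.algebraMap_X] at main2
  have hqP0 : ∀ k, qfac (Polynomial.X : Polynomial ℚ) k ≠ 0 := by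
    intro k
    rw [qfac]
    apply Finset.prod_ne_zero_iff.mpr
    intro i _ h0
    have h1 := congrArg (Polynomial.eval (1 : ℚ)) h0
    simp [Polynomial.eval_finset_sum] at h1
    exact Nat.cast_add_one_ne_zero i h1
  have hq0 : ∀ k, qfac (RatFunc.X : RatFunc ℚ) k ≠ 0 := fun k => by
    rw [← hq k]
    exact RatFunc.algebraMap_ne_zero (hqP0 k)
  have h1X : (1 - RatFunc.X : RatFunc ℚ) ≠ 0 := by
    have hp : (1 - Polynomial.X : Polynomial ℚ) ≠ 0 := fun h => by
      simpa [Polynomial.coeff_one] using congrArg (fun p => Polynomial.coeff p 1) h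
    have h2 := RatFunc.algebraMap_ne_zero (K := ℚ) hp
    rwa [map_sub, map_one, RatFunc.algebraMap_X] at h2
  have main3 : (∑ s ∈ Finset.univ.filter (fun s : Finset (Fin (m + n)) => s.card = m),
        (RatFunc.X : RatFunc ℚ) ^ majW (shuffleWord σ π s))
      * (qfac RatFunc.X m * qfac RatFunc.X n)
      = RatFunc.X ^ (majW σ + majW π) * qfac RatFunc.X (m + n) := by
    apply mul_right_cancel₀ (pow_ne_zero (m + n) h1X)
    linear_combination main2
  rw [show RatFunc.X ^ (majW σ + majW π)
        * (qfac RatFunc.X (m + n) / (qfac RatFunc.X m * qfac RatFunc.X n))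
      = (RatFunc.X ^ (majW σ + majW π) * qfac RatFunc.X (m + n))
        / (qfac RatFunc.X m * qfac RatFunc.X n) from by ring]
  rw [eq_div_iff (mul_ne_zero (hq0 m) (hq0 n))]
  exact main3
end
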